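/- arXiv:2412.12664 — 7 statements merged into one kernel-verified Lean document; each statement's English description precedes it below -/
import Mathlib

section
/- The minimum number of P₄-free bipartite graphs needed to partition the edges of K_n equals ⌈log₂ n⌉. -/
open SimpleGraph

/-- The graph `2K₂`: two disjoint edges, on vertices {0,1} and {2,3}. -/
def twoK2 : SimpleGraph (Fin 4) where
  Adj i j := i ≠ j ∧ i.val / 2 = j.val / 2
  symm := ⟨by decide⟩
  loopless := ⟨by decide⟩

/-- The path `P₃` on 3 vertices. -/
def pathP3 : SimpleGraph (Fin 3) where
  Adj i j := i.val + 1 = j.val ∨ j.val + 1 = i.val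
  symm := ⟨by decide⟩
  loopless := ⟨by decide⟩

/-- The path `P₄` on 4 vertices. -/
def pathP4 : SimpleGraph (Fin 4) where
  Adj i j := i.val + 1 = j.val ∨ j.val + 1 = i.val
  symm := ⟨by decide⟩
  loopless := ⟨by decide⟩

/-- The cycle `C₄` on 4 vertices. -/
def cycleC4 : SimpleGraph (Fin 4) where
  Adj i j := (i.val + 1) % 4 = j.val ∨ (j.val + 1) % 4 = i.val
  symm := ⟨by decide⟩
  loopless := ⟨by decide⟩

/-- The star `S₄ = K_{1,3}` on 4 vertices, with center 0. -/
def starS4 : SimpleGraph (Fin 4) where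
  Adj i j := i ≠ j ∧ (i = 0 ∨ j = 0)
  symm := ⟨by decide⟩
  loopless := ⟨by decide⟩

/-- The graph `K₂ + K₁`: an edge plus an isolated vertex. -/
def K2plusK1 : SimpleGraph (Fin 3) where
  Adj i j := (i = 0 ∧ j = 1) ∨ (i = 1 ∧ j = 0)
  symm := ⟨by decide⟩
  loopless := ⟨by decide⟩

/-- `G` avoids `H`: `H` is not an induced subgraph of `G` restricted to its
support (the vertices incident to an edge), matching the convention that
template graphs have no isolated vertices. -/
def Avoids {α β : Type} (G : SimpleGraph α) (H : SimpleGraph β) : Prop :=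
  IsEmpty (H ↪g (G.induce G.support))

/-- `P` is a partition of the edge set of the complete graph `K_n` into
bipartite graphs: every template is 2-colorable, and every edge of `K_n`
belongs to exactly one template. -/
def IsBipartitePartition (n k : ℕ) (P : Fin k → SimpleGraph (Fin n)) : Prop :=
  (∀ i, (P i).Colorable 2) ∧
    ∀ e ∈ (⊤ : SimpleGraph (Fin n)).edgeSet, ∃! i, e ∈ (P i).edgeSet

noncomputable def chiP4 (n : ℕ) : ℕ :=
  sInf {k | ∃ P : Fin k → SimpleGraph (Fin n),
    IsBipartitePartition n k P ∧ ∀ i, Avoids (P i) pathP4}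

/-!
Lower bound: sending a vertex to the vector of its colours in the `k` bipartite templates is
injective, since two distinct vertices get different colours in the template containing their
edge; hence `n ≤ 2 ^ k`. Upper bound: let template `i` join `u` and `v` when `i` is the highest
bit in which their binary expansions differ. It is a disjoint union of complete bipartite graphs
(the blocks fix the bits above `i`, the sides are given by bit `i`), hence `P₄`-free, and
vertices below `n` can only differ in the bits below `⌈log₂ n⌉`.
-/

namespace Nat

theorem testBit_eq_of_div_two_pow_eq {u v m j : ℕ} (h : u / 2 ^ m = v / 2 ^ m) (hj : m ≤ j) :
    u.testBit j = v.testBit j := by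
  obtain ⟨l, rfl⟩ := Nat.exists_eq_add_of_le' hj
  rw [← testBit_div_two_pow, h, testBit_div_two_pow]

theorem exists_div_two_pow_succ_eq_and_testBit_ne {u v : ℕ} (h : u ≠ v) :
    ∃ i, u / 2 ^ (i + 1) = v / 2 ^ (i + 1) ∧ u.testBit i ≠ v.testBit i := by
  obtain ⟨i, hi, hhigh⟩ := exists_most_significant_bit (xor_ne_zero_iff.mpr h)
  refine ⟨i, eq_of_testBit_eq fun j => ?_, ?_⟩
  · have := hhigh (j + (i + 1)) (by omega)
    rw [testBit_xor] at this
    rw [testBit_div_two_pow, testBit_div_two_pow]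
    simpa using this
  · exact Bool.xor_iff_ne.mp (testBit_xor u v i ▸ hi)

theorem eq_of_div_two_pow_succ_eq_and_testBit_ne {u v i j : ℕ}
    (hi : u / 2 ^ (i + 1) = v / 2 ^ (i + 1) ∧ u.testBit i ≠ v.testBit i)
    (hj : u / 2 ^ (j + 1) = v / 2 ^ (j + 1) ∧ u.testBit j ≠ v.testBit j) : i = j := by
  by_contra hne
  rcases Nat.lt_or_gt_of_ne hne with h | h
  · exact hj.2 (testBit_eq_of_div_two_pow_eq hi.1 h)
  · exact hi.2 (testBit_eq_of_div_two_pow_eq hj.1 h)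

end Nat

namespace SimpleGraph

theorem card_le_two_pow_of_colorable_of_cover {V ι : Type*} [Fintype V] [Fintype ι]
    (G : ι → SimpleGraph V) (hcol : ∀ i, (G i).Colorable 2)
    (hcover : ∀ u v, u ≠ v → ∃ i, (G i).Adj u v) : Fintype.card V ≤ 2 ^ Fintype.card ι := by
  classical
  have C := fun i => (hcol i).some
  have hinj : Function.Injective fun v i => C i v := by
    intro u v huv
    by_contra hne
    obtain ⟨i, hi⟩ := hcover u v hne
    exact (C i).valid hi (congrFun huv i)
  simpa using Fintype.card_le_of_injective _ hinj

variable {V β : Type*}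

def unionCompleteBipartite (block : V → β) (side : V → Bool) : SimpleGraph V where
  Adj u v := block u = block v ∧ side u ≠ side v
  symm := ⟨fun _ _ h => ⟨h.1.symm, h.2.symm⟩⟩
  loopless := ⟨fun _ h => h.2 rfl⟩

@[simp]
theorem unionCompleteBipartite_adj {block : V → β} {side : V → Bool} {u v : V} :
    (unionCompleteBipartite block side).Adj u v ↔ block u = block v ∧ side u ≠ side v :=
  Iff.rfl

theorem unionCompleteBipartite_colorable_two (block : V → β) (side : V → Bool) :
    (unionCompleteBipartite block side).Colorable 2 :=
  (Coloring.mk (G := unionCompleteBipartite block side) side fun h => h.2).colorable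

end SimpleGraph

theorem unionCompleteBipartite_avoids_pathP4 {V β : Type} (block : V → β) (side : V → Bool) :
    Avoids (unionCompleteBipartite block side) pathP4 := by
  let G := unionCompleteBipartite block side
  have hclosed : ∀ ⦃a b c d⦄, G.Adj a b → G.Adj b c → G.Adj c d → G.Adj a d := by
    simp only [G, unionCompleteBipartite_adj]
    intro a b c d hab hbc hcd
    have hsides : ∀ x y z w : Bool, x ≠ y → y ≠ z → z ≠ w → x ≠ w := by decide
    exact ⟨hab.1.trans (hbc.1.trans hcd.1), hsides _ _ _ _ hab.2 hbc.2 hcd.2⟩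
  refine ⟨fun f => ?_⟩
  have h01 : G.Adj (f 0) (f 1) := f.map_rel_iff.mpr (Or.inl rfl)
  have h12 : G.Adj (f 1) (f 2) := f.map_rel_iff.mpr (Or.inl rfl)
  have h23 : G.Adj (f 2) (f 3) := f.map_rel_iff.mpr (Or.inl rfl)
  have h03 := f.map_rel_iff.mp (hclosed h01 h12 h23)
  simp [pathP4] at h03

theorem IsBipartitePartition.le_two_pow {n k : ℕ} {P : Fin k → SimpleGraph (Fin n)}
    (hP : IsBipartitePartition n k P) : n ≤ 2 ^ k := by
  simpa using card_le_two_pow_of_colorable_of_cover P hP.1 fun u v huv =>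
    (hP.2 s(u, v) huv).exists

def bitTemplate (n i : ℕ) : SimpleGraph (Fin n) :=
  unionCompleteBipartite (fun u : Fin n => (u : ℕ) / 2 ^ (i + 1)) (fun u => (u : ℕ).testBit i)

theorem isBipartitePartition_bitTemplate (n : ℕ) :
    IsBipartitePartition n (Nat.clog 2 n) fun i => bitTemplate n i := by
  refine ⟨fun i => unionCompleteBipartite_colorable_two _ _, ?_⟩
  refine Sym2.ind fun u v huv => ?_
  rw [mem_edgeSet, top_adj] at huv
  obtain ⟨i, hi⟩ := Nat.exists_div_two_pow_succ_eq_and_testBit_ne (Fin.val_ne_of_ne huv)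
  have hlt : i < Nat.clog 2 n := by
    by_contra! hge
    have hn : n ≤ 2 ^ i := (Nat.le_pow_clog one_lt_two n).trans (Nat.pow_le_pow_right two_pos hge)
    exact hi.2 <| by
      rw [Nat.testBit_lt_two_pow (u.isLt.trans_le hn), Nat.testBit_lt_two_pow (v.isLt.trans_le hn)]
  refine ⟨⟨i, hlt⟩, hi, fun j hj => Fin.ext ?_⟩
  exact Nat.eq_of_div_two_pow_succ_eq_and_testBit_ne (hj : (bitTemplate n j).Adj u v) hi

theorem chiP4_eq_general (n : ℕ) : chiP4 n = Nat.clog 2 n := by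
  have hmem : Nat.clog 2 n ∈ {k | ∃ P : Fin k → SimpleGraph (Fin n),
      IsBipartitePartition n k P ∧ ∀ i, Avoids (P i) pathP4} :=
    ⟨_, isBipartitePartition_bitTemplate n, fun _ => unionCompleteBipartite_avoids_pathP4 _ _⟩
  refine le_antisymm (Nat.sInf_le hmem) (le_csInf ⟨_, hmem⟩ ?_)
  rintro k ⟨P, hP, -⟩
  exact (Nat.clog_le_iff_le_pow one_lt_two).mpr hP.le_two_pow

/-- `χ'_{P₄}(n) = ⌈log₂ n⌉`. -/
theorem chiP4_eq (n : ℕ) (hn : 1 ≤ n) : chiP4 n = Nat.clog 2 n :=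
  chiP4_eq_general n
end

section
/- If a Ferrers graph F contains a matching of size m, then F has at least m(m+1)/2 edges. -/
/-!
Orient the matching edges `uᵢvᵢ` so that every `uᵢ` lies in the same colour class. The
neighbourhoods `N(uᵢ)` then form a chain, so the relation `N(uⱼ) ⊆ N(uᵢ)` is total and holds
for at least `m(m+1)/2` pairs `(i, j)`. For fixed `i` the partners `vⱼ` of these `j` are distinct
neighbours of `uᵢ`, so the pairs number at most `∑ deg uᵢ`, and this is at most the number of
edges because every edge has exactly one endpoint in the colour class of the `uᵢ`.
-/

open SimpleGraph

open Finset Function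

section TotalRelation

variable {α : Type*} [Fintype α] (r : α → α → Prop) [DecidableRel r] [Std.Total r]

theorem card_add_one_le_card_filter_add_card_filter (a : α) :
    Fintype.card α + 1 ≤ #{b | r a b} + #{b | r b a} := by
  classical
  have hunion : ({b | r a b} : Finset α) ∪ ({b | r b a} : Finset α) = univ :=
    eq_univ_of_forall fun b => by simpa using total_of r a b
  have hinter : a ∈ ({b | r a b} : Finset α) ∩ ({b | r b a} : Finset α) := by
    simpa using (total_of r a a).elim id id
  rw [← card_union_add_card_inter, hunion, card_univ]
  exact Nat.add_le_add_left (card_pos.2 ⟨a, hinter⟩) _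

theorem card_mul_card_add_one_le_two_mul_sum_card_filter :
    Fintype.card α * (Fintype.card α + 1) ≤ 2 * ∑ a, #{b | r a b} := by
  have hswap : ∑ a, #{b | r b a} = ∑ a, #{b | r a b} :=
    (sum_card_bipartiteAbove_eq_sum_card_bipartiteBelow r).symm
  calc Fintype.card α * (Fintype.card α + 1) = ∑ _a : α, (Fintype.card α + 1) := by simp
    _ ≤ ∑ a, (#{b | r a b} + #{b | r b a}) :=
        sum_le_sum fun a _ => card_add_one_le_card_filter_add_card_filter r a
    _ = 2 * ∑ a, #{b | r a b} := by rw [sum_add_distrib, hswap, two_mul]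

end TotalRelation

namespace SimpleGraph

variable {V ι : Type*} {G : SimpleGraph V}

theorem card_le_degree_of_neighborSet_subset {a b : ι → V} (hab : ∀ i, G.Adj (a i) (b i))
    (hb : Injective b) (x : V) [Fintype (G.neighborSet x)] (s : Finset ι)
    (hs : ∀ i ∈ s, G.neighborSet (a i) ⊆ G.neighborSet x) : #s ≤ G.degree x := by
  rw [← card_neighborFinset_eq_degree]
  exact card_le_card_of_injOn b (fun i hi => by simpa using hs i hi (hab i)) hb.injOn

theorem isBipartiteWith_of_adj_ne {c : V → Bool} (hc : ∀ {u v : V}, G.Adj u v → c u ≠ c v) :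
    G.IsBipartiteWith {v | c v = true} {v | c v = false} where
  disjoint := Set.disjoint_left.2 fun v hv hv' => by simp_all
  mem_of_adj v w h := by
    have := hc h
    cases hv : c v <;> cases hw : c w <;> simp_all

theorem exists_oriented_matching_of_adj_ne {c : V → Bool}
    (hc : ∀ {u v : V}, G.Adj u v → c u ≠ c v) {u v : ι → V} (hadj : ∀ i, G.Adj (u i) (v i))
    (hdisj : ∀ i j, i ≠ j → u i ≠ u j ∧ v i ≠ v j ∧ u i ≠ v j ∧ v i ≠ u j) :
    ∃ a b : ι → V, Injective a ∧ Injective b ∧ (∀ i, G.Adj (a i) (b i)) ∧ ∀ i, c (a i) = true := by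
  refine ⟨fun i => if c (u i) then u i else v i, fun i => if c (u i) then v i else u i,
    fun i j h => ?_, fun i j h => ?_, fun i => ?_, fun i => ?_⟩ <;> dsimp only at *
  · by_contra hij
    have := hdisj i j hij
    split_ifs at h <;> simp_all
  · by_contra hij
    have := hdisj i j hij
    split_ifs at h <;> simp_all
  · split_ifs
    exacts [hadj i, (hadj i).symm]
  · have := hc (hadj i)
    split_ifs <;> simp_all

end SimpleGraph

theorem ferrers_matching_edges_general {V : Type} [Fintype V]
    (G : SimpleGraph V) [DecidableRel G.Adj]
    (c : V → Bool) (hc : ∀ {u v : V}, G.Adj u v → c u ≠ c v)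
    (hF : ∀ a b : V, c a = c b →
      G.neighborSet a ⊆ G.neighborSet b ∨ G.neighborSet b ⊆ G.neighborSet a)
    (m : ℕ) (u v : Fin m → V)
    (hadj : ∀ i, G.Adj (u i) (v i))
    (hdisj : ∀ i j, i ≠ j → u i ≠ u j ∧ v i ≠ v j ∧ u i ≠ v j ∧ v i ≠ u j) :
    m * (m + 1) / 2 ≤ G.edgeFinset.card := by
  classical
  obtain ⟨a, b, ha, hb, hab, hca⟩ := G.exists_oriented_matching_of_adj_ne hc hadj hdisj
  let r : Fin m → Fin m → Prop := fun i j => G.neighborSet (a j) ⊆ G.neighborSet (a i)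
  have : Std.Total r := ⟨fun i j => (hF (a i) (a j) (by rw [hca, hca])).symm⟩
  have hpairs := card_mul_card_add_one_le_two_mul_sum_card_filter r
  rw [Fintype.card_fin] at hpairs
  calc m * (m + 1) / 2 ≤ ∑ i, #{j | r i j} := by omega
    _ ≤ ∑ i, G.degree (a i) := sum_le_sum fun i _ =>
        G.card_le_degree_of_neighborSet_subset hab hb _ _ fun j hj => (mem_filter.1 hj).2
    _ = ∑ x ∈ univ.image a, G.degree x := (sum_image (f := fun x => G.degree x) ha.injOn).symm
    _ ≤ ∑ x ∈ {x | c x = true}, G.degree x :=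
        sum_le_sum_of_subset (image_subset_iff.2 fun i _ => mem_filter.2 ⟨mem_univ _, hca i⟩)
    _ = #G.edgeFinset := G.isBipartiteWith_sum_degrees_eq_card_edges
        (t := {x | c x = false}) (by simpa using isBipartiteWith_of_adj_ne hc)

/-- A Ferrers graph containing a matching of size `m` has at least
`m(m+1)/2` edges. -/
theorem ferrers_matching_edges {V : Type} [Fintype V] [DecidableEq V]
    (G : SimpleGraph V) [DecidableRel G.Adj]
    (c : V → Bool) (hc : ∀ {u v : V}, G.Adj u v → c u ≠ c v)
    (hF : ∀ a b : V, c a = c b →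
      G.neighborSet a ⊆ G.neighborSet b ∨ G.neighborSet b ⊆ G.neighborSet a)
    (m : ℕ) (u v : Fin m → V)
    (hadj : ∀ i, G.Adj (u i) (v i))
    (hdisj : ∀ i j, i ≠ j → u i ≠ u j ∧ v i ≠ v j ∧ u i ≠ v j ∧ v i ≠ u j) :
    m * (m + 1) / 2 ≤ G.edgeFinset.card :=
  ferrers_matching_edges_general G c hc hF m u v hadj hdisj
end

section
/- Fix integers k ≥ 1 and d ≥ 0. If the edge set of K_{2^k} is partitioned into bipartite graphs G₁,...,G_{k+d}, then at least k of these graphs each contain a matching of size at least 2^{k−2}/(d+1). -/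
open SimpleGraph

/-!
The endpoints of a maximum matching form a vertex cover of at most twice its size. If fewer
than `k` of the graphs had a matching of size `2^k / (4(d+1))`, take `d + 1` of the others:
their covers together miss more than `2^(k-1)` vertices. Every edge between two missed vertices
lies in one of the remaining `k - 1` bipartite graphs, so the missed vertices have pairwise
distinct class vectors in `{0,1}^(k-1)`, which is impossible.
-/

namespace SimpleGraph

variable {V : Type*} (G : SimpleGraph V)

def IsIndexedMatching {M : ℕ} (u v : Fin M → V) : Prop :=
  (∀ a, G.Adj (u a) (v a)) ∧ ∀ a b, a ≠ b → u a ≠ u b ∧ v a ≠ v b ∧ u a ≠ v b ∧ v a ≠ u b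

variable {G}

theorem IsIndexedMatching.cons {M : ℕ} {u v : Fin M → V} (h : G.IsIndexedMatching u v)
    {x y : V} (hxy : G.Adj x y) (hx : x ∉ Set.range u ∪ Set.range v)
    (hy : y ∉ Set.range u ∪ Set.range v) :
    G.IsIndexedMatching (Fin.cons x u : Fin (M + 1) → V) (Fin.cons y v : Fin (M + 1) → V) := by
  simp only [Set.mem_union, Set.mem_range, not_or, not_exists] at hx hy
  refine ⟨Fin.cases hxy h.1, fun a b hab => ?_⟩
  induction a using Fin.cases <;> induction b using Fin.cases
  · exact absurd rfl hab
  · exact ⟨Ne.symm (hx.1 _), Ne.symm (hy.2 _), Ne.symm (hx.2 _), Ne.symm (hy.1 _)⟩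
  · exact ⟨hx.1 _, hy.2 _, hy.1 _, hx.2 _⟩
  · exact h.2 _ _ (by simpa using hab)

theorem IsIndexedMatching.le_card [Fintype V] {M : ℕ} {u v : Fin M → V}
    (h : G.IsIndexedMatching u v) : M ≤ Fintype.card V := by
  simpa using Fintype.card_le_of_injective u fun a b hab => by_contra fun hne => (h.2 a b hne).1 hab

theorem exists_isIndexedMatching_isVertexCover [Fintype V] [DecidableEq V] (G : SimpleGraph V) :
    ∃ (M : ℕ) (u v : Fin M → V) (C : Finset V),
      G.IsIndexedMatching u v ∧ C.card ≤ 2 * M ∧ G.IsVertexCover C := by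
  classical
  let HasMatching (M : ℕ) : Prop := ∃ u v : Fin M → V, G.IsIndexedMatching u v
  set M := Nat.findGreatest HasMatching (Fintype.card V)
  obtain ⟨u, v, huv⟩ : HasMatching M :=
    Nat.findGreatest_spec (Nat.zero_le _) ⟨finZeroElim, finZeroElim, finZeroElim, finZeroElim⟩
  refine ⟨M, u, v, Finset.univ.image u ∪ Finset.univ.image v, huv, ?_, fun x y hxy => ?_⟩
  · grw [Finset.card_union_le, Finset.card_image_le, Finset.card_image_le]
    simp [two_mul]
  · by_contra! hcov
    have hext := huv.cons hxy (by simpa using hcov.1) (by simpa using hcov.2)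
    exact Nat.findGreatest_is_greatest (Nat.lt_succ_self M) hext.le_card ⟨_, _, hext⟩

theorem IsBipartitePartition.exists_adj {n k : ℕ} {P : Fin k → SimpleGraph (Fin n)}
    (hP : IsBipartitePartition n k P) {x y : Fin n} (hxy : x ≠ y) : ∃ i, (P i).Adj x y := by
  obtain ⟨i, hi, -⟩ := hP.2 s(x, y) (by simpa using hxy)
  exact ⟨i, hi⟩

theorem IsBipartitePartition.exists_notMem_adj_of_isVertexCover {n k : ℕ}
    {P : Fin k → SimpleGraph (Fin n)} (hP : IsBipartitePartition n k P) {T : Finset (Fin k)}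
    {B : Finset (Fin n)} (hB : ∀ i ∈ T, (P i).IsVertexCover B) {x y : Fin n} (hx : x ∉ B)
    (hy : y ∉ B) (hxy : x ≠ y) : ∃ i ∉ T, (P i).Adj x y := by
  obtain ⟨i, hi⟩ := hP.exists_adj hxy
  exact ⟨i, fun hiT => (hB i hiT hi).elim hx hy, hi⟩

end SimpleGraph

open SimpleGraph Finset

/-- Distinct vertices of `W` are told apart by their colour vectors `R → Fin n`. -/
theorem card_le_pow_of_forall_exists_adj {ι V : Type*} {n : ℕ} {G : ι → SimpleGraph V}
    (hcol : ∀ i, (G i).Colorable n) (R : Finset ι) (W : Finset V)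
    (hW : ∀ x ∈ W, ∀ y ∈ W, x ≠ y → ∃ i ∈ R, (G i).Adj x y) : W.card ≤ n ^ R.card := by
  classical
  have c := fun i => (hcol i).some
  have hinj : Function.Injective fun (x : W) (i : R) => c i x := by
    intro x y hxy
    by_contra hne
    obtain ⟨i, hi, hadj⟩ := hW x x.2 y y.2 (Subtype.coe_ne_coe.2 hne)
    exact (c i).valid hadj (congrFun hxy ⟨i, hi⟩)
  simpa using Fintype.card_le_of_injective _ hinj

theorem Finset.card_biUnion_lt_of_forall_card_mul_lt {ι α : Type*} [DecidableEq α] {T : Finset ι}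
    {C : ι → Finset α} {N : ℕ} (hT : T.Nonempty) (h : ∀ i ∈ T, T.card * (C i).card < N) :
    (T.biUnion C).card < N := by
  refine Nat.lt_of_mul_lt_mul_left (a := T.card) ?_
  calc T.card * (T.biUnion C).card ≤ ∑ i ∈ T, T.card * (C i).card := by
        rw [← mul_sum]; exact Nat.mul_le_mul_left _ card_biUnion_le
    _ < ∑ _i ∈ T, N := sum_lt_sum_of_nonempty hT h
    _ = T.card * N := by simp

theorem many_large_matchings_general (k d : ℕ)
    (P : Fin (k + d) → SimpleGraph (Fin (2 ^ k)))
    (hpart : IsBipartitePartition (2 ^ k) (k + d) P) :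
    ∃ S : Finset (Fin (k + d)), k ≤ S.card ∧
      ∀ i ∈ S, ∃ (M : ℕ) (u v : Fin M → Fin (2 ^ k)),
        (∀ a, (P i).Adj (u a) (v a)) ∧
        (∀ a b, a ≠ b → u a ≠ u b ∧ v a ≠ v b ∧ u a ≠ v b ∧ v a ≠ u b) ∧
        (2 : ℝ) ^ k / (4 * (d + 1)) ≤ (M : ℝ) := by
  classical
  choose M u v C hmatch hC hcover using fun i => exists_isIndexedMatching_isVertexCover (P i)
  set S := univ.filter fun i => (2 : ℝ) ^ k / (4 * (d + 1)) ≤ M i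
  refine ⟨S, ?_, fun i hi => ⟨M i, u i, v i, (hmatch i).1, (hmatch i).2, (mem_filter.1 hi).2⟩⟩
  by_contra! hS
  obtain ⟨j, rfl⟩ := Nat.exists_eq_add_one.2 (hS.trans_le' (Nat.zero_le _))
  obtain ⟨T, hTS, hT⟩ : ∃ T ⊆ Sᶜ, T.card = d + 1 :=
    exists_subset_card_eq (by rw [card_compl, Fintype.card_fin]; omega)
  have hsmall : ∀ i ∈ T, T.card * (C i).card < 2 ^ j := by
    intro i hi
    have hMi : M i * (4 * (d + 1)) < 2 ^ (j + 1) := by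
      have hMi : (M i : ℝ) * (4 * (d + 1)) < 2 ^ (j + 1) := by
        simpa [S, lt_div_iff₀ (by positivity : (0 : ℝ) < 4 * (d + 1))] using hTS hi
      exact_mod_cast hMi
    rw [hT]
    nlinarith [hC i, pow_succ 2 j]
  set B := T.biUnion C
  have hB : B.card < 2 ^ j :=
    card_biUnion_lt_of_forall_card_mul_lt (card_pos.1 (by omega)) hsmall
  have hW : Bᶜ.card ≤ 2 ^ Tᶜ.card := by
    refine card_le_pow_of_forall_exists_adj hpart.1 _ _ fun x hx y hy hxy => ?_
    obtain ⟨i, hiT, hi⟩ := hpart.exists_notMem_adj_of_isVertexCover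
      (fun i hi => (hcover i).subset (by simpa using subset_biUnion_of_mem C hi))
      (mem_compl.1 hx) (mem_compl.1 hy) hxy
    exact ⟨i, mem_compl.2 hiT, hi⟩
  rw [card_compl, card_compl, hT, Fintype.card_fin, Fintype.card_fin,
    show j + 1 + d - (d + 1) = j by omega] at hW
  have hpow := pow_succ 2 j
  omega

/-- If `K_{2^k}` is partitioned into `k + d` bipartite graphs, then at least
`k` of them contain a matching of size at least `2^{k-2}/(d+1)`. -/
theorem many_large_matchings (k d : ℕ) (hk : 1 ≤ k)
    (P : Fin (k + d) → SimpleGraph (Fin (2 ^ k)))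
    (hpart : IsBipartitePartition (2 ^ k) (k + d) P) :
    ∃ S : Finset (Fin (k + d)), k ≤ S.card ∧
      ∀ i ∈ S, ∃ (M : ℕ) (u v : Fin M → Fin (2 ^ k)),
        (∀ a, (P i).Adj (u a) (v a)) ∧
        (∀ a b, a ≠ b → u a ≠ u b ∧ v a ≠ v b ∧ u a ≠ v b ∧ v a ≠ u b) ∧
        (2 : ℝ) ^ k / (4 * (d + 1)) ≤ (M : ℝ) :=
  many_large_matchings_general k d P hpart
end

section
/- For all n ≥ 1, the edges of K_n can be partitioned into at most 2⌈√n⌉ − 2 Ferrers graphs, i.e., χ'_{2K₂}(n) ≤ 2⌈√n⌉ − 2. -/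
open SimpleGraph

noncomputable def chiFerrers (n : ℕ) : ℕ :=
  sInf {k | ∃ P : Fin k → SimpleGraph (Fin n),
    IsBipartitePartition n k P ∧ ∀ i, Avoids (P i) twoK2}

/-!
Put the vertices on an `m × m` grid, `m = ⌈√n⌉`. Call an edge an ascent if its endpoint in the
lower row is weakly to the left of the other one, and a descent otherwise. The ascents whose upper
endpoint lies in row `j` join row `j` to the rows below it, a vertex `u` below being adjacent to `v`
in row `j` iff `col u ≤ col v`: a Ferrers graph. Symmetrically, the descents whose right endpoint
lies in column `j` form a Ferrers graph. Rows and columns `1, …, m - 1` give `2m - 2` graphs.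
-/

instance : DecidableRel twoK2.Adj := fun i j => inferInstanceAs (Decidable (i ≠ j ∧ _))

lemma avoids_twoK2_of_adj {V : Type} {G : SimpleGraph V}
    (h : ∀ a b c d, G.Adj a b → G.Adj c d → G.Adj a c ∨ G.Adj a d ∨ G.Adj b c ∨ G.Adj b d) :
    Avoids G twoK2 := by
  refine ⟨fun f => ?_⟩
  have hf (x y : Fin 4) : G.Adj (f x) (f y) ↔ twoK2.Adj x y := f.map_adj_iff
  have := h _ _ _ _ ((hf 0 1).2 (by decide)) ((hf 2 3).2 (by decide))
  simp only [hf] at this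
  revert this
  decide

section Ferrers

variable {V : Type} {α : Type*} [LinearOrder α] {L R : Set V} {f g : V → α}

def ferrersGraph (L R : Set V) (f g : V → α) : SimpleGraph V :=
  SimpleGraph.fromRel fun u v => u ∈ L ∧ v ∈ R ∧ f u ≤ g v

lemma ferrersGraph_adj (hLR : Disjoint L R) {u v : V} :
    (ferrersGraph L R f g).Adj u v ↔
      (u ∈ L ∧ v ∈ R ∧ f u ≤ g v) ∨ (v ∈ L ∧ u ∈ R ∧ f v ≤ g u) := by
  refine ⟨fun h => h.2, fun h => ⟨?_, h⟩⟩
  rintro rfl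
  rcases h with ⟨hL, hR, -⟩ | ⟨hL, hR, -⟩ <;> exact hLR.notMem_of_mem_left hL hR

lemma ferrersGraph_isBipartiteWith (hLR : Disjoint L R) :
    (ferrersGraph L R f g).IsBipartiteWith L R :=
  ⟨hLR, fun u v h => by
    rcases (ferrersGraph_adj hLR).1 h with ⟨hu, hv, -⟩ | ⟨hv, hu, -⟩
    exacts [.inl ⟨hu, hv⟩, .inr ⟨hu, hv⟩]⟩

/-- Of two edges oriented from `L` to `R`, the one whose `L`-end has the smaller `f`-value also
reaches the `R`-end of the other. -/
lemma ferrersGraph_avoids_twoK2 (hLR : Disjoint L R) :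
    Avoids (ferrersGraph L R f g) twoK2 := by
  set G := ferrersGraph L R f g
  have cross {a b c d : V} (hab : a ∈ L ∧ b ∈ R ∧ f a ≤ g b) (hcd : c ∈ L ∧ d ∈ R ∧ f c ≤ g d) :
      G.Adj a d ∨ G.Adj b c := by
    rcases le_total (f a) (f c) with h | h
    · exact .inl ((ferrersGraph_adj hLR).2 (.inl ⟨hab.1, hcd.2.1, h.trans hcd.2.2⟩))
    · exact .inr ((ferrersGraph_adj hLR).2 (.inr ⟨hcd.1, hab.2.1, h.trans hab.2.2⟩))
  refine avoids_twoK2_of_adj fun a b c d hab hcd => ?_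
  rcases (ferrersGraph_adj hLR).1 hab with hab | hab <;>
    rcases (ferrersGraph_adj hLR).1 hcd with hcd | hcd <;>
    have := cross hab hcd <;> tauto

end Ferrers

section Grid

variable {V : Type} (row col : V → ℕ)

lemma disjoint_setOf_lt_setOf_eq (h : V → ℕ) (j : ℕ) : Disjoint {v | h v < j} {v | h v = j} :=
  Set.disjoint_left.2 fun _ hlt heq => hlt.ne heq

def ascentGraph (j : ℕ) : SimpleGraph V :=
  ferrersGraph {v | row v < j} {v | row v = j} col col

def descentGraph (j : ℕ) : SimpleGraph V :=
  ferrersGraph {v | col v = j} {v | col v < j} row row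

lemma ascentGraph_adj {j : ℕ} {u v : V} :
    (ascentGraph row col j).Adj u v ↔
      (row u < j ∧ row v = j ∧ col u ≤ col v) ∨ (row v < j ∧ row u = j ∧ col v ≤ col u) :=
  ferrersGraph_adj (disjoint_setOf_lt_setOf_eq row j)

lemma descentGraph_adj {j : ℕ} {u v : V} :
    (descentGraph row col j).Adj u v ↔
      (col u = j ∧ col v < j ∧ row u ≤ row v) ∨ (col v = j ∧ col u < j ∧ row v ≤ row u) :=
  ferrersGraph_adj (disjoint_setOf_lt_setOf_eq col j).symm

/-- Ascents are indexed by the row `j + 1` of their upper endpoint, descents by the column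
`j + 1` of their right endpoint; row `0` and column `0` carry no such edges. -/
def gridFamily (m : ℕ) : Fin (m - 1) ⊕ Fin (m - 1) → SimpleGraph V :=
  Sum.elim (fun j => ascentGraph row col (j + 1)) (fun j => descentGraph row col (j + 1))

lemma gridFamily_isBipartite (m : ℕ) (i : Fin (m - 1) ⊕ Fin (m - 1)) :
    (gridFamily row col m i).IsBipartite := by
  rcases i with j | j
  · exact (ferrersGraph_isBipartiteWith (disjoint_setOf_lt_setOf_eq row _)).isBipartite
  · exact (ferrersGraph_isBipartiteWith (disjoint_setOf_lt_setOf_eq col _).symm).isBipartite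

lemma gridFamily_avoids_twoK2 (m : ℕ) (i : Fin (m - 1) ⊕ Fin (m - 1)) :
    Avoids (gridFamily row col m i) twoK2 := by
  rcases i with j | j
  · exact ferrersGraph_avoids_twoK2 (disjoint_setOf_lt_setOf_eq row _)
  · exact ferrersGraph_avoids_twoK2 (disjoint_setOf_lt_setOf_eq col _).symm

lemma exists_gridFamily_adj {m : ℕ} (hrow : ∀ v, row v < m) (hcol : ∀ v, col v < m)
    (hinj : ∀ u v, row u = row v → col u = col v → u = v) {u v : V} (huv : u ≠ v) :
    ∃ i, (gridFamily row col m i).Adj u v := by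
  have := hrow u; have := hrow v; have := hcol u; have := hcol v
  have hne : row u ≠ row v ∨ col u ≠ col v := by
    by_contra! h
    exact huv (hinj u v h.1 h.2)
  by_cases hasc : (row u < row v ∧ col u ≤ col v) ∨ (row v < row u ∧ col v ≤ col u)
  · refine ⟨.inl ⟨max (row u) (row v) - 1, by omega⟩, ?_⟩
    simp only [gridFamily, Sum.elim_inl, ascentGraph_adj]
    omega
  · refine ⟨.inr ⟨max (col u) (col v) - 1, by omega⟩, ?_⟩
    simp only [gridFamily, Sum.elim_inr, descentGraph_adj]
    omega

lemma gridFamily_adj_unique {m : ℕ} {u v : V} {i i' : Fin (m - 1) ⊕ Fin (m - 1)}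
    (h : (gridFamily row col m i).Adj u v) (h' : (gridFamily row col m i').Adj u v) : i = i' := by
  rcases i with j | j <;> rcases i' with j' | j' <;>
    simp only [gridFamily, Sum.elim_inl, Sum.elim_inr, ascentGraph_adj, descentGraph_adj,
      Sum.inl.injEq, Sum.inr.injEq, reduceCtorEq, Fin.ext_iff] at h h' ⊢ <;>
    omega

lemma gridFamily_partition {m : ℕ} (hrow : ∀ v, row v < m) (hcol : ∀ v, col v < m)
    (hinj : ∀ u v, row u = row v → col u = col v → u = v) :
    ∀ e ∈ (⊤ : SimpleGraph V).edgeSet, ∃! i, e ∈ (gridFamily row col m i).edgeSet := by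
  intro e he
  induction e using Sym2.ind with
  | _ u v =>
    obtain ⟨i, hi⟩ := exists_gridFamily_adj row col hrow hcol hinj he
    exact ⟨i, hi, fun i' hi' => gridFamily_adj_unique row col hi' hi⟩

end Grid

lemma chiFerrers_le_card {ι : Type} [Fintype ι] {n : ℕ} (P : ι → SimpleGraph (Fin n))
    (hbip : ∀ i, (P i).Colorable 2)
    (hpart : ∀ e ∈ (⊤ : SimpleGraph (Fin n)).edgeSet, ∃! i, e ∈ (P i).edgeSet)
    (havoid : ∀ i, Avoids (P i) twoK2) :
    chiFerrers n ≤ Fintype.card ι :=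
  let e := Fintype.equivFin ι
  Nat.sInf_le ⟨P ∘ e.symm, ⟨fun _ => hbip _, fun x hx => e.existsUnique_congr_left.1 (hpart x hx)⟩,
    fun _ => havoid _⟩

lemma le_natCeil_sqrt_mul_self (n : ℕ) : n ≤ ⌈√(n : ℝ)⌉₊ * ⌈√(n : ℝ)⌉₊ := by
  have h : (n : ℝ) ≤ ⌈√(n : ℝ)⌉₊ * ⌈√(n : ℝ)⌉₊ :=
    calc (n : ℝ) = √n * √n := (Real.mul_self_sqrt n.cast_nonneg).symm
      _ ≤ _ := mul_self_le_mul_self (Real.sqrt_nonneg _) (Nat.le_ceil _)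
  exact_mod_cast h

theorem chiFerrers_upper_general (n : ℕ) :
    chiFerrers n ≤ 2 * ⌈Real.sqrt n⌉₊ - 2 := by
  set m := ⌈Real.sqrt n⌉₊
  let row (v : Fin n) := v.val / m
  let col (v : Fin n) := v.val % m
  have hnm : n ≤ m * m := le_natCeil_sqrt_mul_self n
  have hrow (v : Fin n) : row v < m := Nat.div_lt_of_lt_mul (v.2.trans_le hnm)
  have hcol (v : Fin n) : col v < m :=
    Nat.mod_lt _ (Nat.pos_of_ne_zero fun hm => by simpa [hm] using v.2.trans_le hnm)
  have hinj (u v : Fin n) (hr : row u = row v) (hc : col u = col v) : u = v := by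
    rw [Fin.ext_iff, ← Nat.div_add_mod u.val m, ← Nat.div_add_mod v.val m]
    exact congrArg₂ _ (congrArg _ hr) hc
  calc chiFerrers n ≤ Fintype.card (Fin (m - 1) ⊕ Fin (m - 1)) :=
        chiFerrers_le_card _ (gridFamily_isBipartite row col m)
          (gridFamily_partition row col hrow hcol hinj) (gridFamily_avoids_twoK2 row col m)
    _ = 2 * m - 2 := by simp only [Fintype.card_sum, Fintype.card_fin]; omega

/-- `χ'_{2K₂}(n) ≤ 2⌈√n⌉ - 2`. -/
theorem chiFerrers_upper (n : ℕ) (hn : 1 ≤ n) :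
    chiFerrers n ≤ 2 * ⌈Real.sqrt n⌉₊ - 2 :=
  chiFerrers_upper_general n
end

section
/- For all n ≥ 2, every partition of the edges of K_n into Ferrers graphs uses more than ⌊log₂ n⌋ + (1/4)√⌊log₂ n⌋ − 1 parts. -/
open SimpleGraph

/-!
Let `L = ⌊log₂ n⌋`, write the number of parts as `L + d`, and fix a set `S` of `2 ^ L` vertices.
Vertices pairwise joined by 2-colourable parts from a set `I` are separated by their colour
vectors, so there are at most `2 ^ |I|` of them; in particular `L ≤ k`.

A part without a matching of size `s + 1` inside `S` has a vertex cover of size `2s` there.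
Removing the covers of `d + 1` such parts from `S` would leave more than `2 ^ (L - 1)` vertices
joined only by the other `L - 1` parts when `s + 1 = ⌈2 ^ (L - 2) / (d + 1)⌉`; so at least `L`
parts have a matching of size `s + 1` in `S`. In a `2K₂`-free graph any two edges of a matching are
joined by a further edge, so each such part has at least `(s + 2).choose 2` edges inside `S`. The
parts are edge-disjoint, and comparing with the `(2 ^ L + 1).choose 2` pairs of `S` forces
`L < 16 (d + 1) ^ 2`, that is `√L / 4 < d + 1`.
-/

open Finset

variable {V : Type}

theorem Avoids.isEmpty_embedding {α β : Type} {G : SimpleGraph α} {H : SimpleGraph β}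
    (hG : Avoids G H) (hH : ∀ x, ∃ y, H.Adj x y) : IsEmpty (H ↪g G) := by
  refine ⟨fun f => hG.false ⟨⟨fun x => ⟨f x, ?_⟩, fun x y h => f.injective congr($h.1)⟩, ?_⟩⟩
  · obtain ⟨y, hxy⟩ := hH x
    exact ⟨f y, f.map_rel_iff.2 hxy⟩
  · intro x y
    exact f.map_rel_iff

theorem Avoids.cross_adj_of_twoK2 {G : SimpleGraph V} (hG : Avoids G twoK2)
    {a b x y : V} (hab : G.Adj a b) (hxy : G.Adj x y)
    (hax : a ≠ x) (hay : a ≠ y) (hbx : b ≠ x) (hby : b ≠ y) :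
    G.Adj a x ∨ G.Adj a y ∨ G.Adj b x ∨ G.Adj b y := by
  by_contra! h
  have hne := hab.ne
  have hne' := hxy.ne
  refine (hG.isEmpty_embedding fun i => ⟨![1, 0, 3, 2] i, by fin_cases i <;> simp [twoK2]⟩).false
    ⟨⟨![a, b, x, y], fun i j hij => ?_⟩, fun {i j} => ?_⟩
  · fin_cases i <;> fin_cases j <;> simp_all [eq_comm]
  · show G.Adj (![a, b, x, y] i) (![a, b, x, y] j) ↔ twoK2.Adj i j
    fin_cases i <;> fin_cases j <;> simp_all [twoK2, G.adj_comm]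

/-- `π` sends both ends of the `i`-th edge to `i`; this is what makes the edges vertex-disjoint. -/
def HasMatchingIn (G : SimpleGraph V) (S : Finset V) (m : ℕ) : Prop :=
  ∃ (a b : Fin m → V) (π : V → Fin m),
    ∀ i, G.Adj (a i) (b i) ∧ a i ∈ S ∧ b i ∈ S ∧ π (a i) = i ∧ π (b i) = i

theorem HasMatchingIn.choose_two_le_card [DecidableEq V] {G : SimpleGraph V} [DecidableRel G.Adj]
    (hG : Avoids G twoK2) {S : Finset V} {m : ℕ} (hM : HasMatchingIn G S m) :
    (m + 1).choose 2 ≤ #{e ∈ S.sym2 | e ∈ G.edgeSet} := by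
  obtain ⟨a, b, π, h⟩ := hM
  -- Each pair `{i, j}` of matching edges is hit by an edge joining them: the `i`-th edge itself if
  -- `i = j`, and the cross edge provided by `2K₂`-freeness otherwise.
  rw [← Fintype.card_fin m, ← card_univ, ← card_sym2]
  refine card_le_card_of_surjOn (Sym2.map π) ?_
  rintro z -
  induction z using Sym2.ind with | _ i j => ?_
  suffices ∃ u v, G.Adj u v ∧ u ∈ S ∧ v ∈ S ∧ π u = i ∧ π v = j by
    obtain ⟨u, v, huv, hu, hv, rfl, rfl⟩ := this
    exact ⟨s(u, v), by simp [huv, hu, hv], rfl⟩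
  obtain ⟨hi, hai, hbi, hπai, hπbi⟩ := h i
  obtain ⟨hj, haj, hbj, hπaj, hπbj⟩ := h j
  rcases eq_or_ne i j with rfl | hij
  · exact ⟨a i, b i, hi, hai, hbi, hπai, hπbi⟩
  have hne {u v} (hu : π u = i) (hv : π v = j) : u ≠ v := fun huv => hij (hu ▸ hv ▸ congrArg π huv)
  rcases hG.cross_adj_of_twoK2 hi hj (hne hπai hπaj) (hne hπai hπbj) (hne hπbi hπaj)
    (hne hπbi hπbj) with h | h | h | h
  · exact ⟨_, _, h, hai, haj, hπai, hπaj⟩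
  · exact ⟨_, _, h, hai, hbj, hπai, hπbj⟩
  · exact ⟨_, _, h, hbi, haj, hπbi, hπaj⟩
  · exact ⟨_, _, h, hbi, hbj, hπbi, hπbj⟩

theorem HasMatchingIn.cons [DecidableEq V] {G : SimpleGraph V} {S : Finset V} {m : ℕ} {u v : V}
    (huv : G.Adj u v) (hu : u ∈ S) (hv : v ∈ S) (hM : HasMatchingIn G ((S.erase u).erase v) m) :
    HasMatchingIn G S (m + 1) := by
  obtain ⟨a, b, π, h⟩ := hM
  refine ⟨Fin.cons u a, Fin.cons v b, fun w => if w = u ∨ w = v then 0 else (π w).succ,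
    Fin.cases (by simp [huv, hu, hv]) fun i => ?_⟩
  obtain ⟨hi, hai, hbi, hπai, hπbi⟩ := h i
  simp only [mem_erase] at hai hbi
  simp [hi, hai, hbi, hπai, hπbi]

theorem exists_hasMatchingIn_or_cover [DecidableEq V] (G : SimpleGraph V) (S : Finset V) (s : ℕ) :
    HasMatchingIn G S (s + 1) ∨
      ∃ C : Finset V, #C ≤ 2 * s ∧ ∀ u ∈ S, ∀ v ∈ S, G.Adj u v → u ∈ C ∨ v ∈ C := by
  induction s using Nat.strong_induction_on generalizing S with | _ s ih => ?_
  by_cases h : ∃ u ∈ S, ∃ v ∈ S, G.Adj u v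
  swap
  · push Not at h
    exact .inr ⟨∅, by simp, fun u hu v hv huv => (h u hu v hv huv).elim⟩
  obtain ⟨u, hu, v, hv, huv⟩ := h
  rcases s with _ | s
  · exact .inl ⟨fun _ => u, fun _ => v, fun _ => 0,
      fun i => ⟨huv, hu, hv, (Fin.fin_one_eq_zero i).symm, (Fin.fin_one_eq_zero i).symm⟩⟩
  rcases ih s (by omega) ((S.erase u).erase v) with hM | ⟨C, hC, hcover⟩
  · exact .inl (hM.cons huv hu hv)
  refine .inr ⟨insert u (insert v C), ?_, fun x hx y hy hxy => ?_⟩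
  · grw [card_insert_le, card_insert_le, hC]
    omega
  by_cases hxy' : x = u ∨ x = v ∨ y = u ∨ y = v
  · rcases hxy' with rfl | rfl | rfl | rfl <;> simp
  · push Not at hxy'
    rcases hcover x (by simp [*]) y (by simp [*]) hxy with h | h <;> simp [h]

theorem choose_two_lt_mul_choose_two {L d w s : ℕ} (hL : 16 * (d + 1) ^ 2 ≤ L) (hw : 1 ≤ w)
    (hs : w ≤ (s + 1) * (d + 1)) : (4 * w + 1).choose 2 < L * (s + 2).choose 2 := by
  have hchoose (n : ℕ) : (n + 1).choose 2 * 2 = (n + 1) * n := by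
    rw [← Nat.add_one_mul_choose_eq, Nat.choose_one_right, mul_comm]
  have hsq : 16 * w ^ 2 ≤ L * (s + 1) ^ 2 :=
    calc 16 * w ^ 2 ≤ 16 * ((s + 1) * (d + 1)) ^ 2 := by gcongr
      _ = 16 * (d + 1) ^ 2 * (s + 1) ^ 2 := by ring
      _ ≤ L * (s + 1) ^ 2 := by gcongr
  have hlin : 16 * w ≤ L * (s + 1) :=
    calc 16 * w ≤ 16 * (d + 1) ^ 2 * (s + 1) := by nlinarith
      _ ≤ L * (s + 1) := by gcongr
  have h1 := hchoose (4 * w)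
  have h2 := hchoose (s + 1)
  nlinarith

section Partition

variable {ι : Type*} {P : ι → SimpleGraph V} {S : Finset V}

theorem card_le_pow_card_of_colorable {I : Finset ι} {m : ℕ} (hcol : ∀ i ∈ I, (P i).Colorable m)
    (hcover : ∀ u ∈ S, ∀ v ∈ S, u ≠ v → ∃ i ∈ I, (P i).Adj u v) : #S ≤ m ^ #I := by
  classical
  let color : V → I → Fin m := fun v i => (hcol i i.2).some v
  calc #S ≤ #(univ : Finset (I → Fin m)) := card_le_card_of_injOn color (by simp) ?_
    _ = m ^ #I := by simp
  intro u hu v hv huv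
  by_contra hne
  obtain ⟨i, hi, hadj⟩ := hcover u hu v hv hne
  exact (hcol i hi).some.valid hadj (congrFun huv ⟨i, hi⟩)

variable [DecidableEq V]

theorem card_mul_choose_two_le [∀ i, DecidableRel (P i).Adj]
    (hdisj : Pairwise fun i j => Disjoint (P i).edgeSet (P j).edgeSet)
    (hfree : ∀ i, Avoids (P i) twoK2) {I : Finset ι} {m : ℕ}
    (hI : ∀ i ∈ I, HasMatchingIn (P i) S m) : #I * (m + 1).choose 2 ≤ (#S + 1).choose 2 := by
  have hdisjS : (I : Set ι).PairwiseDisjoint fun i => {e ∈ S.sym2 | e ∈ (P i).edgeSet} :=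
    fun i _ j _ hij => disjoint_filter.2 fun _ _ hi hj => Set.disjoint_left.1 (hdisj hij) hi hj
  calc #I * (m + 1).choose 2 ≤ ∑ i ∈ I, #{e ∈ S.sym2 | e ∈ (P i).edgeSet} :=
        card_nsmul_le_sum _ _ _ fun i hi => (hI i hi).choose_two_le_card (hfree i)
    _ = #(I.biUnion fun i => {e ∈ S.sym2 | e ∈ (P i).edgeSet}) := (card_biUnion hdisjS).symm
    _ ≤ #S.sym2 := card_le_card (biUnion_subset.2 fun i _ => filter_subset _ _)
    _ = (#S + 1).choose 2 := card_sym2 S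

variable [Fintype ι] [DecidableEq ι]

theorem card_le_of_not_hasMatchingIn {m s : ℕ} {B : Finset ι}
    (hcol : ∀ i ∉ B, (P i).Colorable m) (hcover : ∀ u ∈ S, ∀ v ∈ S, u ≠ v → ∃ i, (P i).Adj u v)
    (hB : ∀ i ∈ B, ¬HasMatchingIn (P i) S (s + 1)) : #S ≤ m ^ #Bᶜ + #B * (2 * s) := by
  have hC (i) (hi : i ∈ B) := (exists_hasMatchingIn_or_cover (P i) S s).resolve_left (hB i hi)
  choose! C hCcard hCcover using hC
  have hrest : #(S \ B.biUnion C) ≤ m ^ #Bᶜ := by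
    refine card_le_pow_card_of_colorable (fun i hi => hcol i (mem_compl.1 hi)) ?_
    intro u hu v hv huv
    simp only [mem_sdiff, mem_biUnion, not_exists, not_and] at hu hv
    obtain ⟨i, hi⟩ := hcover u hu.1 v hv.1 huv
    refine ⟨i, mem_compl.2 fun hiB => ?_, hi⟩
    rcases hCcover i hiB u hu.1 v hv.1 hi with h | h
    exacts [hu.2 i hiB h, hv.2 i hiB h]
  calc #S ≤ #(S \ B.biUnion C) + #(B.biUnion C) := card_le_card_sdiff_add_card
    _ ≤ m ^ #Bᶜ + #B * (2 * s) := add_le_add hrest (card_biUnion_le_card_mul _ _ _ hCcard)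

theorem exists_card_le_forall_hasMatchingIn {m d s : ℕ} (hcol : ∀ i, (P i).Colorable m)
    (hcover : ∀ u ∈ S, ∀ v ∈ S, u ≠ v → ∃ i, (P i).Adj u v)
    (hS : m ^ (Fintype.card ι - (d + 1)) + (d + 1) * (2 * s) < #S) :
    ∃ I : Finset ι, Fintype.card ι - d ≤ #I ∧ ∀ i ∈ I, HasMatchingIn (P i) S (s + 1) := by
  classical
  set good := univ.filter fun i => HasMatchingIn (P i) S (s + 1)
  refine ⟨good, ?_, fun i hi => (mem_filter.1 hi).2⟩
  by_contra! hfew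
  obtain ⟨B, hB, hBcard⟩ := exists_subset_card_eq (s := goodᶜ) (n := d + 1)
    (by rw [card_compl]; omega)
  have := card_le_of_not_hasMatchingIn (fun i _ => hcol i) hcover (B := B) (s := s)
    fun i hi => by simpa [good] using hB hi
  rw [card_compl, hBcard] at this
  omega

theorem lt_sixteen_mul_sq [∀ i, DecidableRel (P i).Adj] {L d : ℕ} (hι : Fintype.card ι = L + d)
    (hS : #S = 2 ^ L) (hcol : ∀ i, (P i).Colorable 2)
    (hcover : ∀ u ∈ S, ∀ v ∈ S, u ≠ v → ∃ i, (P i).Adj u v)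
    (hdisj : Pairwise fun i j => Disjoint (P i).edgeSet (P j).edgeSet)
    (hfree : ∀ i, Avoids (P i) twoK2) : L < 16 * (d + 1) ^ 2 := by
  by_contra! hL
  have hL2 : 2 ≤ L := by nlinarith
  obtain ⟨w, hSw, hhalf, hw⟩ : ∃ w, #S = 4 * w ∧ 2 ^ (L - 1) = 2 * w ∧ 1 ≤ w :=
    ⟨2 ^ (L - 2), by rw [hS, ← pow_sub_mul_pow 2 hL2]; ring,
      by rw [← pow_succ', show L - 2 + 1 = L - 1 by omega], Nat.one_le_two_pow⟩
  obtain ⟨s, hs, hs'⟩ : ∃ s, (d + 1) * s < w ∧ w ≤ (s + 1) * (d + 1) := by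
    have := Nat.div_add_mod (w - 1) (d + 1)
    have := Nat.mod_lt (w - 1) (show 0 < d + 1 by omega)
    exact ⟨(w - 1) / (d + 1), by omega, by rw [add_mul, one_mul, mul_comm]; omega⟩
  obtain ⟨I, hIcard, hI⟩ := exists_card_le_forall_hasMatchingIn (s := s) hcol hcover
    (by rw [hι, show L + d - (d + 1) = L - 1 by omega, hhalf, hSw, mul_left_comm]; omega)
  have hcount := card_mul_choose_two_le hdisj hfree hI
  rw [hι, Nat.add_sub_cancel] at hIcard
  rw [hSw] at hcount
  exact (choose_two_lt_mul_choose_two hL hw hs').not_ge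
    (le_trans (Nat.mul_le_mul_right _ hIcard) hcount)

end Partition

theorem ferrers_partition_lower_general (n : ℕ) (k : ℕ)
    (P : Fin k → SimpleGraph (Fin n))
    (hpart : IsBipartitePartition n k P)
    (hfree : ∀ i, Avoids (P i) twoK2) :
    (Nat.log 2 n : ℝ) + Real.sqrt (Nat.log 2 n) / 4 - 1 < (k : ℝ) := by
  classical
  obtain ⟨hcol, hunique⟩ := hpart
  have hcover (u v : Fin n) (huv : u ≠ v) : ∃ i, (P i).Adj u v := (hunique s(u, v) huv).exists
  have hdisj : Pairwise fun i j => Disjoint (P i).edgeSet (P j).edgeSet := fun i j hij =>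
    Set.disjoint_left.2 fun e hi hj => hij ((hunique e (edgeSet_mono le_top hi)).unique hi hj)
  rcases n.eq_zero_or_pos with rfl | hn
  · simp only [Nat.log_zero_right, CharP.cast_eq_zero, Real.sqrt_zero]
    linarith [k.cast_nonneg (α := ℝ)]
  set L := Nat.log 2 n
  obtain ⟨S, -, hS⟩ := exists_subset_card_eq (s := (univ : Finset (Fin n))) (n := 2 ^ L)
    (by simpa using Nat.pow_log_le_self 2 hn.ne')
  have hLk : 2 ^ L ≤ 2 ^ k := by
    simpa [hS] using card_le_pow_card_of_colorable (I := univ) (S := S) (fun i _ => hcol i)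
      fun u _ v _ huv => by simpa using hcover u v huv
  obtain ⟨d, rfl⟩ := Nat.exists_eq_add_of_le ((Nat.pow_le_pow_iff_right (by norm_num)).1 hLk)
  have hLd : (L : ℝ) < 16 * (d + 1) ^ 2 := by
    exact_mod_cast lt_sixteen_mul_sq (by simp) hS hcol (fun u _ v _ => hcover u v) hdisj hfree
  have hsqrt : √(L : ℝ) < 4 * (d + 1) := (Real.sqrt_lt' (by positivity)).2 (by linarith)
  push_cast
  linarith

/-- Every partition of `E(K_n)` into Ferrers graphs (2K₂-free bipartite
graphs) uses more than `⌊log₂ n⌋ + (1/4)√⌊log₂ n⌋ - 1` parts. -/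
theorem ferrers_partition_lower (n : ℕ) (hn : 2 ≤ n) (k : ℕ)
    (P : Fin k → SimpleGraph (Fin n))
    (hpart : IsBipartitePartition n k P)
    (hfree : ∀ i, Avoids (P i) twoK2) :
    (Nat.log 2 n : ℝ) + Real.sqrt (Nat.log 2 n) / 4 - 1 < (k : ℝ) :=
  ferrers_partition_lower_general n k P hpart hfree
end

section
/- For n ≥ 4, the minimum number of {P₄, C₄}-avoiding bipartite graphs (i.e., disjoint unions of stars) needed to partition E(K_n) equals ⌈n/2⌉ + 1. -/
open SimpleGraph

noncomputable def chiStarOrchard (n : ℕ) : ℕ :=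
  sInf {k | ∃ P : Fin k → SimpleGraph (Fin n),
    IsBipartitePartition n k P ∧ ∀ i, Avoids (P i) pathP4 ∧ Avoids (P i) cycleC4}

/-!
A bipartite graph without induced `P₄` or `C₄` is a star forest: in every path `a - b - c` the
end `a` is a leaf. A star forest supported on `m ≥ 3` vertices has at most `m - 1` edges, with
equality only for a spanning star, and two edge-disjoint graphs cannot both contain a spanning
star of the same vertex set. If `K_n` were split into `k ≤ (n + 1) / 2` star forests, counting
edges forces one of them to be a spanning star with centre `c`; the others live on the remaining
`n - 1` vertices, at most one of them is a spanning star there, and counting edges fails again.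

Conversely, group the vertices into the pairs `{2i, 2i + 1}` (the last one a singleton when `n`
is odd). For each pair `i`, template `i` joins `2i + r` to `2j + r` for `j > i` and to
`2j + 1 - r` for `j < i`, two stars centred at `2i` and `2i + 1`; one more template is the
matching inside the pairs.
-/

open Finset Function

lemma Nat.two_mul_choose_two (n : ℕ) : 2 * n.choose 2 = n * (n - 1) := by
  rw [Nat.choose_two_right, Nat.mul_div_cancel' (Nat.even_mul_pred_self n).two_dvd]

namespace SimpleGraph

variable {V : Type*} {G H : SimpleGraph V}

def IsStarForest (G : SimpleGraph V) : Prop :=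
  ∀ ⦃a b c⦄, G.Adj a b → G.Adj b c → a ≠ c → ∀ ⦃d⦄, G.Adj a d → d = b

def HasSpanningStar (G : SimpleGraph V) (s : Finset V) : Prop :=
  ∃ c ∈ s, ∀ x ∈ s, x ≠ c → G.Adj c x

section Centers

variable {p : V → Prop} (hp : ∀ ⦃u v⦄, G.Adj u v → (p u ↔ ¬p v))
include hp

lemma isStarForest_of_centers
    (hleaf : ∀ v, ¬p v → ∀ ⦃x y⦄, G.Adj v x → G.Adj v y → x = y) :
    G.IsStarForest := by
  intro a b c hab hbc hac d had
  by_cases ha : p a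
  · exact absurd (hleaf b ((hp hab).mp ha) hab.symm hbc) hac
  · exact hleaf a ha had hab

lemma colorable_two_of_centers : G.Colorable 2 := by
  classical
  refine ⟨Coloring.mk (fun v ↦ if p v then 0 else 1) fun {u v} huv ↦ ?_⟩
  have := hp huv
  split_ifs <;> tauto

end Centers

lemma HasSpanningStar.not_disjoint {s : Finset V} (hG : G.HasSpanningStar s)
    (hH : H.HasSpanningStar s) (hs : 2 ≤ #s) : ¬Disjoint G H := by
  obtain ⟨c, hc, hGc⟩ := hG
  obtain ⟨d, hd, hHd⟩ := hH
  rw [disjoint_left]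
  intro hdisj
  by_cases hcd : c = d
  · subst hcd
    obtain ⟨x, hx, hxc⟩ := exists_mem_ne (by omega : 1 < #s) c
    exact hdisj c x (hGc x hx hxc) (hHd x hx hxc)
  · exact hdisj c d (hGc d hd (Ne.symm hcd)) (hHd c hc hcd).symm

open Classical in
lemma card_filter_hasSpanningStar_le_one {ι : Type*} {Q : ι → SimpleGraph V}
    (hdisj : Pairwise (Disjoint on Q)) (t : Finset ι) {s : Finset V} (hs : 2 ≤ #s) :
    #{i ∈ t | (Q i).HasSpanningStar s} ≤ 1 :=
  card_le_one.mpr fun _ hi _ hj ↦ by_contra fun hij ↦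
    (mem_filter.mp hi).2.not_disjoint (mem_filter.mp hj).2 hs (hdisj hij)

lemma pairwise_disjoint_of_existsUnique {ι : Type*} {P : ι → SimpleGraph V}
    (hP : ∀ e ∈ (⊤ : SimpleGraph V).edgeSet, ∃! i, e ∈ (P i).edgeSet) :
    Pairwise (Disjoint on P) := by
  intro i j hij
  rw [onFun, ← disjoint_edgeSet, Set.disjoint_left]
  intro e hi hj
  obtain ⟨u, -, hu⟩ := hP e (edgeSet_mono le_top hi)
  exact hij ((hu i hi).trans (hu j hj).symm)

section Finite

variable [Fintype V]

lemma sum_card_edgeFinset_eq_of_existsUnique [DecidableEq V] {ι : Type*} [Fintype ι]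
    {P : ι → SimpleGraph V} [∀ i, DecidableRel (P i).Adj]
    (hP : ∀ e ∈ (⊤ : SimpleGraph V).edgeSet, ∃! i, e ∈ (P i).edgeSet) :
    ∑ i, #(P i).edgeFinset = (Fintype.card V).choose 2 := by
  rw [← card_edgeFinset_top_eq_card_choose_two, ← card_biUnion]
  · congr 1
    ext e
    simp only [mem_biUnion, mem_univ, true_and, mem_edgeFinset]
    exact ⟨fun ⟨i, hi⟩ ↦ edgeSet_mono le_top hi, fun he ↦ (hP e he).exists⟩
  · exact fun i _ j _ hij ↦ disjoint_edgeFinset.mpr (pairwise_disjoint_of_existsUnique hP hij)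

variable [DecidableRel G.Adj]

lemma IsStarForest.degree_eq_one_of_adj (hG : G.IsStarForest) {v x : V}
    (hv : 2 ≤ G.degree v) (hvx : G.Adj v x) : G.degree x = 1 := by
  obtain ⟨y, hy, hyx⟩ :=
    exists_mem_ne (s := G.neighborFinset v) (by rwa [card_neighborFinset_eq_degree]) x
  rw [mem_neighborFinset] at hy
  exact degree_eq_one_iff_existsUnique_adj.mpr
    ⟨v, hvx.symm, fun d hd ↦ hG hvx.symm hy (Ne.symm hyx) hd⟩

lemma IsStarForest.card_edgeFinset_le [DecidableEq V] (hG : G.IsStarForest) :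
    #G.edgeFinset ≤ #{x | G.degree x = 1} := by
  have hcover :
      G.edgeFinset ⊆ ({x | G.degree x = 1} : Finset V).biUnion (G.incidenceFinset ·) := by
    intro e he
    induction e using Sym2.ind with
    | h u v =>
      rw [mem_edgeFinset, mem_edgeSet] at he
      simp only [mem_biUnion, mem_filter, mem_univ, true_and, mem_incidenceFinset]
      by_cases hu : G.degree u = 1
      · exact ⟨u, hu, G.mk'_mem_incidenceSet_left_iff.mpr he⟩
      · have hu2 : 2 ≤ G.degree u := by
          have := G.degree_pos_iff_exists_adj u |>.mpr ⟨v, he⟩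
          omega
        exact ⟨v, hG.degree_eq_one_of_adj hu2 he, G.mk'_mem_incidenceSet_right_iff.mpr he⟩
  calc #G.edgeFinset ≤ ∑ x ∈ {x | G.degree x = 1}, #(G.incidenceFinset x) :=
        (card_le_card hcover).trans card_biUnion_le
    _ = #{x | G.degree x = 1} := by
        rw [card_eq_sum_ones]
        exact sum_congr rfl fun x hx ↦ by
          rw [card_incidenceFinset_eq_degree, (mem_filter.mp hx).2]

lemma sum_degree_eq_two_mul_card_edgeFinset {s : Finset V} (hs : G.support ⊆ s) :
    ∑ v ∈ s, G.degree v = 2 * #G.edgeFinset := by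
  rw [← sum_degrees_eq_twice_card_edges]
  refine sum_subset (subset_univ s) fun v _ hv ↦ ?_
  exact (G.degree_eq_zero_iff_notMem_support v).mpr fun h ↦ hv (hs h)

lemma two_mul_card_edgeFinset_eq_card {s : Finset V} (hs : G.support ⊆ s)
    (hleaf : ∀ x ∈ s, G.degree x = 1) : 2 * #G.edgeFinset = #s := by
  rw [← sum_degree_eq_two_mul_card_edgeFinset hs, card_eq_sum_ones]
  exact sum_congr rfl hleaf

lemma filter_degree_eq_one_subset_erase [DecidableEq V] {s : Finset V} (hs : G.support ⊆ s)
    {c : V} (hc : G.degree c ≠ 1) : ({x | G.degree x = 1} : Finset V) ⊆ s.erase c := by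
  intro x hx
  have hx1 : G.degree x = 1 := (mem_filter.mp hx).2
  refine mem_erase.mpr ⟨fun h ↦ hc (h ▸ hx1), hs ?_⟩
  exact (G.degree_eq_zero_iff_notMem_support x).not_left.mp (by omega)

lemma IsStarForest.card_edgeFinset_add_one_le (hG : G.IsStarForest) {s : Finset V}
    (hs : G.support ⊆ s) (hne : s.Nonempty) : #G.edgeFinset + 1 ≤ #s := by
  classical
  by_cases hleaf : ∀ x ∈ s, G.degree x = 1
  · have := two_mul_card_edgeFinset_eq_card hs hleaf
    have := hne.card_pos
    omega
  · obtain ⟨c, hc, hc1⟩ := not_forall₂.mp hleaf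
    have hleaves := card_le_card (filter_degree_eq_one_subset_erase hs hc1)
    rw [card_erase_of_mem hc] at hleaves
    have := hG.card_edgeFinset_le
    have := hne.card_pos
    omega

lemma IsStarForest.hasSpanningStar_of_card_le (hG : G.IsStarForest) {s : Finset V}
    (hs : G.support ⊆ s) (h3 : 3 ≤ #s) (hcard : #s ≤ #G.edgeFinset + 1) :
    G.HasSpanningStar s := by
  classical
  by_cases hleaf : ∀ x ∈ s, G.degree x = 1
  · have := two_mul_card_edgeFinset_eq_card hs hleaf
    omega
  obtain ⟨c, hc, hc1⟩ := not_forall₂.mp hleaf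
  have hleaves : ({x | G.degree x = 1} : Finset V) = s.erase c := by
    refine eq_of_subset_of_card_le (filter_degree_eq_one_subset_erase hs hc1) ?_
    have := hG.card_edgeFinset_le
    rw [card_erase_of_mem hc]
    omega
  have hdeg : #s - 1 ≤ G.degree c := by
    have hsum := sum_degree_eq_two_mul_card_edgeFinset hs
    rw [← add_sum_erase s _ hc, ← hleaves, sum_congr rfl fun x hx ↦ (mem_filter.mp hx).2,
      sum_const, smul_eq_mul, mul_one, hleaves, card_erase_of_mem hc] at hsum
    omega
  have hnbrs : G.neighborFinset c = s.erase c := by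
    refine eq_of_subset_of_card_le (fun x hx ↦ ?_) ?_
    · have hcx : G.Adj c x := (mem_neighborFinset G c x).mp hx
      exact mem_erase.mpr ⟨hcx.ne.symm, hs ((G.mem_support).mpr ⟨c, hcx.symm⟩)⟩
    · rwa [card_erase_of_mem hc, card_neighborFinset_eq_degree]
  refine ⟨c, hc, fun x hx hxc ↦ ?_⟩
  rw [← mem_neighborFinset, hnbrs]
  exact mem_erase.mpr ⟨hxc, hx⟩

lemma IsStarForest.card_edgeFinset_add_two_le (hG : G.IsStarForest) {s : Finset V}
    (hs : G.support ⊆ s) (h3 : 3 ≤ #s) (hstar : ¬G.HasSpanningStar s) :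
    #G.edgeFinset + 2 ≤ #s := by
  by_contra h
  exact hstar (hG.hasSpanningStar_of_card_le hs h3 (by omega))

section Family

variable {ι : Type*} (P : ι → SimpleGraph V) [∀ i, DecidableRel (P i).Adj]

open Classical in
lemma sum_card_edgeFinset_le (hP : ∀ i, (P i).IsStarForest) (t : Finset ι) {s : Finset V}
    (hs : ∀ i ∈ t, (P i).support ⊆ s) (h3 : 3 ≤ #s) :
    ∑ i ∈ t, #(P i).edgeFinset ≤ #t * (#s - 2) + #{i ∈ t | (P i).HasSpanningStar s} := by
  calc ∑ i ∈ t, #(P i).edgeFinset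
      ≤ ∑ i ∈ t, ((#s - 2) + if (P i).HasSpanningStar s then 1 else 0) := by
        refine sum_le_sum fun i hi ↦ ?_
        split_ifs with hstar
        · have := (hP i).card_edgeFinset_add_one_le (hs i hi) (card_pos.mp (by omega))
          omega
        · have := (hP i).card_edgeFinset_add_two_le (hs i hi) h3 hstar
          omega
    _ = #t * (#s - 2) + #{i ∈ t | (P i).HasSpanningStar s} := by
        rw [sum_add_distrib, sum_const, smul_eq_mul, sum_boole, Nat.cast_id]

variable [Fintype ι] (hP : ∀ i, (P i).IsStarForest)
  (hsum : ∑ i, #(P i).edgeFinset = (Fintype.card V).choose 2)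
include hP hsum

lemma exists_hasSpanningStar (hV : 3 ≤ Fintype.card V)
    (hk : 2 * Fintype.card ι ≤ Fintype.card V + 1) : ∃ i, (P i).HasSpanningStar univ := by
  classical
  by_contra! hnone
  have hbound := sum_card_edgeFinset_le P hP univ (s := univ) (fun _ _ ↦ by simp)
    (by rwa [card_univ])
  rw [filter_false_of_mem fun i _ ↦ hnone i, card_empty, card_univ, card_univ, hsum] at hbound
  have hchoose := Nat.two_mul_choose_two (Fintype.card V)
  obtain ⟨m, hm⟩ := Nat.exists_eq_add_of_le' hV
  rw [hm] at hbound hk hchoose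
  simp only [Nat.reduceSubDiff] at hbound hchoose
  nlinarith

theorem card_add_two_le_two_mul_card_of_isStarForest (hdisj : Pairwise (Disjoint on P))
    (hV : 4 ≤ Fintype.card V) : Fintype.card V + 2 ≤ 2 * Fintype.card ι := by
  classical
  by_contra! hk
  obtain ⟨i₀, c, -, hc⟩ := exists_hasSpanningStar P hP hsum (by omega) (by omega)
  have hsupp : ∀ j ∈ univ.erase i₀, (P j).support ⊆ univ.erase c := by
    intro j hj x hx
    refine mem_erase.mpr ⟨?_, mem_univ x⟩
    rintro rfl
    obtain ⟨y, hy⟩ := hx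
    exact disjoint_left.mp (hdisj (ne_of_mem_erase hj).symm) _ _ (hc y (mem_univ y) hy.ne.symm) hy
  have hcard : #(univ.erase c) = Fintype.card V - 1 := by
    rw [card_erase_of_mem (mem_univ c), card_univ]
  have hrest := sum_card_edgeFinset_le P hP (univ.erase i₀) hsupp (by omega)
  have hone := card_filter_hasSpanningStar_le_one hdisj (univ.erase i₀) (s := univ.erase c)
    (by omega)
  have hstar := (hP i₀).card_edgeFinset_add_one_le (s := univ) (by simp) ⟨c, mem_univ c⟩
  rw [← add_sum_erase _ _ (mem_univ i₀)] at hsum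
  rw [card_erase_of_mem (mem_univ i₀), card_univ, hcard] at hrest
  rw [card_univ] at hstar
  -- the `(n - 1)(n - 2) / 2` edges avoiding `c` do not fit into `(k - 1)(n - 3) + 1`
  have hchoose := Nat.two_mul_choose_two (Fintype.card V)
  obtain ⟨m, hm⟩ := Nat.exists_eq_add_of_le' hV
  obtain ⟨l, hl⟩ := Nat.exists_eq_add_of_le' (Fintype.card_pos_iff.mpr ⟨i₀⟩)
  rw [hm] at hsum hk hrest hstar hchoose
  rw [hl] at hk hrest
  simp only [Nat.add_sub_cancel, Nat.reduceSubDiff] at hrest hchoose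
  nlinarith

end Family

end Finite

end SimpleGraph

section Avoidance

variable {α β : Type} {G : SimpleGraph α} {H : SimpleGraph β}

lemma Avoids.isEmpty_embedding_s17 (h : Avoids G H) (hH : ∀ i, ∃ j, H.Adj i j) :
    IsEmpty (H ↪g G) := by
  refine ⟨fun f ↦ h.false ⟨⟨fun i ↦ ⟨f i, ?_⟩,
    fun i j hij ↦ f.injective (congrArg Subtype.val hij)⟩, f.map_rel_iff⟩⟩
  obtain ⟨j, hij⟩ := hH i
  exact G.mem_support.mpr ⟨f j, f.map_rel_iff.mpr hij⟩

lemma SimpleGraph.IsStarForest.avoids (hG : G.IsStarForest) {a b c d : β} (hab : H.Adj a b)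
    (hbc : H.Adj b c) (hcd : H.Adj c d) (hac : a ≠ c) (hbd : b ≠ d) : Avoids G H := by
  refine ⟨fun f ↦ hac (f.injective (Subtype.ext ?_))⟩
  have adj {x y : β} (h : H.Adj x y) : G.Adj (f x) (f y) := f.map_rel_iff.mpr h
  exact hG (adj hbc) (adj hcd) (fun h ↦ hbd (f.injective (Subtype.ext h))) (adj hab.symm)

lemma SimpleGraph.IsStarForest.avoids_pathP4_and_cycleC4 (hG : G.IsStarForest) :
    Avoids G pathP4 ∧ Avoids G cycleC4 :=
  ⟨hG.avoids (a := 0) (b := 1) (c := 2) (d := 3) (Or.inl rfl) (Or.inl rfl) (Or.inl rfl)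
      (by decide) (by decide),
    hG.avoids (a := 0) (b := 1) (c := 2) (d := 3) (Or.inl rfl) (Or.inl rfl) (Or.inl rfl)
      (by decide) (by decide)⟩

lemma SimpleGraph.isStarForest_of_avoids (hcol : G.Colorable 2) (hP : Avoids G pathP4)
    (hC : Avoids G cycleC4) : G.IsStarForest := by
  classical
  intro a b c hab hbc hac d had
  by_contra hdb
  have htri {x y z : α} (hxy : G.Adj x y) (hyz : G.Adj y z) : ¬G.Adj x z := fun hxz ↦
    hcol.cliqueFree (by norm_num : 2 < 3) {x, y, z} (is3Clique_triple_iff.mpr ⟨hxy, hxz, hyz⟩)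
  have hac' := htri hab hbc
  have hbd := htri had.symm hab
  have hdc : d ≠ c := by rintro rfl; exact hac' had
  have hinj : Function.Injective ![d, a, b, c] := by
    intro i j hij
    fin_cases i <;> fin_cases j <;> simp_all [had.ne', hab.ne, hbc.ne, eq_comm]
  -- every adjacency among `d, a, b, c`, oriented as in the hypotheses, for `simp` below
  have hflip : _ ∧ _ ∧ _ ∧ _ ∧ _ ∧ _ := ⟨G.adj_comm d a, G.adj_comm b a, G.adj_comm c b,
    G.adj_comm d c, G.adj_comm c a, G.adj_comm b d⟩
  by_cases hcd : G.Adj c d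
  · refine (hC.isEmpty_embedding_s17 fun i ↦ ?_).false ⟨⟨_, hinj⟩, fun {i j} ↦ ?_⟩
    · fin_cases i <;> simp [cycleC4, Fin.exists_fin_succ]
    · fin_cases i <;> fin_cases j <;> simp [cycleC4, hflip, had, hab, hbc, hcd, hac', hbd]
  · refine (hP.isEmpty_embedding_s17 fun i ↦ ?_).false ⟨⟨_, hinj⟩, fun {i j} ↦ ?_⟩
    · fin_cases i <;> simp [pathP4, Fin.exists_fin_succ]
    · fin_cases i <;> fin_cases j <;> simp [pathP4, hflip, had, hab, hbc, hcd, hac', hbd]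

end Avoidance

section Construction

-- `u / 2` is the pair of `u` and `u % 2` its side; index `(n + 1) / 2` is the matching.
def orchardIndex (n u v : ℕ) : ℕ :=
  if u / 2 = v / 2 then (n + 1) / 2
  else if u % 2 = v % 2 then min (u / 2) (v / 2) else max (u / 2) (v / 2)

def IsOrchardCenter (n i v : ℕ) : Prop :=
  if i = (n + 1) / 2 then v % 2 = 0 else v / 2 = i

lemma orchardIndex_comm (n u v : ℕ) : orchardIndex n u v = orchardIndex n v u := by
  unfold orchardIndex
  split_ifs <;> omega

lemma orchardIndex_lt {n u v : ℕ} (hu : u < n) (hv : v < n) :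
    orchardIndex n u v < (n + 1) / 2 + 1 := by
  unfold orchardIndex
  split_ifs <;> omega

def starOrchard (n : ℕ) (i : Fin ((n + 1) / 2 + 1)) : SimpleGraph (Fin n) where
  Adj u v := u ≠ v ∧ orchardIndex n u v = i
  symm := ⟨fun _ _ h ↦ ⟨h.1.symm, orchardIndex_comm n _ _ ▸ h.2⟩⟩
  loopless := ⟨fun _ h ↦ h.1 rfl⟩

variable {n : ℕ} {i : Fin ((n + 1) / 2 + 1)}

lemma starOrchard_isOrchardCenter_iff {u v : Fin n} (h : (starOrchard n i).Adj u v) :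
    IsOrchardCenter n i u ↔ ¬IsOrchardCenter n i v := by
  obtain ⟨huv, hi⟩ := h
  have := Fin.val_ne_of_ne huv
  have := u.isLt
  have := v.isLt
  unfold IsOrchardCenter
  rw [← hi]
  unfold orchardIndex
  split_ifs <;> omega

lemma starOrchard_eq_of_not_isOrchardCenter {v x y : Fin n} (hv : ¬IsOrchardCenter n i v)
    (hx : (starOrchard n i).Adj v x) (hy : (starOrchard n i).Adj v y) : x = y := by
  obtain ⟨hvx, hix⟩ := hx
  obtain ⟨hvy, hiy⟩ := hy
  have := Fin.val_ne_of_ne hvx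
  have := Fin.val_ne_of_ne hvy
  have := v.isLt
  have := x.isLt
  have := y.isLt
  apply Fin.ext
  unfold IsOrchardCenter at hv
  rw [← hix] at hv
  rw [← hiy] at hix
  unfold orchardIndex at hv hix
  split_ifs at hv hix <;> omega

lemma isStarForest_starOrchard (n : ℕ) (i : Fin ((n + 1) / 2 + 1)) :
    (starOrchard n i).IsStarForest :=
  SimpleGraph.isStarForest_of_centers (fun _ _ ↦ starOrchard_isOrchardCenter_iff)
    fun _ hv _ _ ↦ starOrchard_eq_of_not_isOrchardCenter hv

lemma isBipartitePartition_starOrchard (n : ℕ) :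
    IsBipartitePartition n ((n + 1) / 2 + 1) (starOrchard n) := by
  refine ⟨fun i ↦ SimpleGraph.colorable_two_of_centers
    (fun _ _ ↦ starOrchard_isOrchardCenter_iff), fun e he ↦ ?_⟩
  induction e using Sym2.ind with
  | h u v =>
    exact ⟨⟨orchardIndex n u v, orchardIndex_lt u.isLt v.isLt⟩, ⟨he, rfl⟩,
      fun i hi ↦ Fin.ext (hi : (starOrchard n i).Adj u v).2.symm⟩

end Construction

/-- For `n ≥ 4`, `χ'_{P₄,C₄}(n) = ⌈n/2⌉ + 1`. -/
theorem chiStarOrchard_eq (n : ℕ) (hn : 4 ≤ n) :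
    chiStarOrchard n = (n + 1) / 2 + 1 := by
  have hmem : (n + 1) / 2 + 1 ∈ {k | ∃ P : Fin k → SimpleGraph (Fin n),
      IsBipartitePartition n k P ∧ ∀ i, Avoids (P i) pathP4 ∧ Avoids (P i) cycleC4} :=
    ⟨starOrchard n, isBipartitePartition_starOrchard n,
      fun i ↦ (isStarForest_starOrchard n i).avoids_pathP4_and_cycleC4⟩
  refine le_antisymm (Nat.sInf_le hmem) (le_csInf ⟨_, hmem⟩ ?_)
  rintro k ⟨P, ⟨hcol, hpart⟩, havoid⟩
  classical
  have hbound := SimpleGraph.card_add_two_le_two_mul_card_of_isStarForest P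
    (fun i ↦ SimpleGraph.isStarForest_of_avoids (hcol i) (havoid i).1 (havoid i).2)
    (SimpleGraph.sum_card_edgeFinset_eq_of_existsUnique hpart)
    (SimpleGraph.pairwise_disjoint_of_existsUnique hpart) (by simpa using hn)
  simp only [Fintype.card_fin] at hbound
  omega
end

section
/- The minimum number of {P₄, C₄, S₄}-avoiding bipartite graphs needed to partition E(K_n) is (3/4)n + o(n). -/
open SimpleGraph

noncomputable def chiCherryOrchard (n : ℕ) : ℕ :=
  sInf {k | ∃ P : Fin k → SimpleGraph (Fin n),
    IsBipartitePartition n k P ∧ ∀ i, Avoids (P i) pathP4 ∧ Avoids (P i) cycleC4 ∧ Avoids (P i) starS4}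

/-!
A bipartite graph with no induced `P₄`, `C₄` or `S₄` has maximum degree at most two and every
edge has an endpoint of degree one (otherwise one of the three forbidden graphs appears, as
bipartite graphs have no triangles). Counting the degree-one vertices gives at most `2n/3` edges,
so covering the `n(n-1)/2` edges of `Kₙ` takes at least `3(n-1)/4` such graphs.

For the upper bound, take the vertex set `ZMod 3 × W` with `|W| = 2h ≥ n/3`. The edges inside
the three parts are covered by three disjoint copies of an optimal partition of `K_W`. The edges
from part `p` to part `p + 1` split into the `2h` perfect matchings `(p, x) — (p + 1, x + d)`,
`d ∈ W`, and writing `W = A × ZMod 2` these `6h` matchings pair up into `3h` unions of disjoint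
cherries. Hence `χ(n) ≤ χ(2h) + 3h` with `h = ⌈n/6⌉`, which solves to `3n/4 + O(log n)`.
-/

namespace SimpleGraph

variable {V W : Type*} {G : SimpleGraph V} {H : SimpleGraph W}

/-- A cherry orchard: a vertex-disjoint union of edges and paths `P₃`. -/
structure IsCherryOrchard (G : SimpleGraph V) : Prop where
  eq_or_eq_or_eq : ∀ ⦃v a b c⦄, G.Adj v a → G.Adj v b → G.Adj v c → a = b ∨ a = c ∨ b = c
  subsingleton_or_subsingleton : ∀ ⦃u v⦄, G.Adj u v →
    (G.neighborSet u).Subsingleton ∨ (G.neighborSet v).Subsingleton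

namespace IsCherryOrchard

lemma of_hom (φ : G →g H) (hφ : ∀ v, Set.InjOn φ (G.neighborSet v)) (hH : H.IsCherryOrchard) :
    G.IsCherryOrchard where
  eq_or_eq_or_eq v a b c ha hb hc := by
    rcases hH.eq_or_eq_or_eq (φ.map_adj ha) (φ.map_adj hb) (φ.map_adj hc) with h | h | h
    · exact .inl (hφ v ha hb h)
    · exact .inr (.inl (hφ v ha hc h))
    · exact .inr (.inr (hφ v hb hc h))
  subsingleton_or_subsingleton u v huv := by
    refine (hH.subsingleton_or_subsingleton (φ.map_adj huv)).imp ?_ ?_ <;>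
      exact fun h x hx y hy => hφ _ hx hy (h (φ.map_adj hx) (φ.map_adj hy))

lemma comap (f : W ↪ V) (hG : G.IsCherryOrchard) : (G.comap f).IsCherryOrchard :=
  of_hom (Embedding.comap f G).toHom (fun _ => f.injective.injOn) hG

lemma not_adj_adj_adj (hG : G.IsCherryOrchard) {a b c d : V} (hac : a ≠ c) (hbd : b ≠ d)
    (hab : G.Adj a b) (hbc : G.Adj b c) (hcd : G.Adj c d) : False := by
  rcases hG.subsingleton_or_subsingleton hbc with h | h
  · exact hac (h hab.symm hbc)
  · exact hbd (h hbc.symm hcd)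

end IsCherryOrchard

end SimpleGraph

lemma avoids_of_isEmpty {V β : Type} {G : SimpleGraph V} {H : SimpleGraph β}
    (h : IsEmpty (H ↪g G)) : Avoids G H :=
  ⟨fun f => h.false ((Embedding.induce G.support).comp f)⟩

lemma not_avoids_of_adj_iff {V β : Type} [LinearOrder β] {G : SimpleGraph V}
    {H : SimpleGraph β} (hH : ∀ i, ∃ j, H.Adj i j) (f : β → V) (hf : f.Injective)
    (hadj : ∀ i j, i < j → (G.Adj (f i) (f j) ↔ H.Adj i j)) : ¬ Avoids G H := by
  have hadj' (i j : β) : G.Adj (f i) (f j) ↔ H.Adj i j := by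
    rcases lt_trichotomy i j with h | rfl | h
    · exact hadj i j h
    · simp
    · rw [G.adj_comm, H.adj_comm, hadj j i h]
  exact fun ⟨h⟩ => h
    { toFun i := ⟨f i, let ⟨j, hj⟩ := hH i; ⟨f j, (hadj' i j).2 hj⟩⟩
      inj' _ _ hij := hf (congrArg Subtype.val hij)
      map_rel_iff' := hadj' _ _ }

namespace SimpleGraph

section Avoids

variable {V : Type} {G : SimpleGraph V}

lemma IsCherryOrchard.avoids (hG : G.IsCherryOrchard) :
    Avoids G pathP4 ∧ Avoids G cycleC4 ∧ Avoids G starS4 := by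
  refine ⟨avoids_of_isEmpty ⟨fun φ => ?_⟩, avoids_of_isEmpty ⟨fun φ => ?_⟩,
    avoids_of_isEmpty ⟨fun φ => ?_⟩⟩
  iterate 2
    exact hG.not_adj_adj_adj (a := φ 0) (b := φ 1) (c := φ 2) (d := φ 3)
      (φ.injective.ne (by decide)) (φ.injective.ne (by decide))
      (φ.map_adj_iff.2 (.inl rfl)) (φ.map_adj_iff.2 (.inl rfl)) (φ.map_adj_iff.2 (.inl rfl))
  have star (i : Fin 4) (hi : i ≠ 0) : G.Adj (φ 0) (φ i) := φ.map_adj_iff.2 ⟨hi.symm, .inl rfl⟩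
  have := hG.eq_or_eq_or_eq (star 1 (by decide)) (star 2 (by decide)) (star 3 (by decide))
  simp only [φ.injective.eq_iff] at this
  revert this
  decide

lemma Colorable.not_adj_of_adj_of_adj (hG : G.Colorable 2) {a b c : V} (hab : G.Adj a b)
    (hbc : G.Adj b c) : ¬ G.Adj a c := fun hac => by
  classical
  exact hG.cliqueFree (by norm_num : 2 < 3) {a, b, c} (is3Clique_triple_iff.2 ⟨hab, hac, hbc⟩)

lemma eq_or_eq_or_eq_of_avoids_starS4 (hG : G.Colorable 2) (hS : Avoids G starS4) {v a b c : V}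
    (ha : G.Adj v a) (hb : G.Adj v b) (hc : G.Adj v c) : a = b ∨ a = c ∨ b = c := by
  by_contra! hne
  obtain ⟨hab, hac, hbc⟩ := hne
  have hab' := hG.not_adj_of_adj_of_adj ha.symm hb
  have hac' := hG.not_adj_of_adj_of_adj ha.symm hc
  have hbc' := hG.not_adj_of_adj_of_adj hb.symm hc
  refine not_avoids_of_adj_iff ?_ ![v, a, b, c] ?_ ?_ hS
  · simp only [starS4]
    decide
  · intro i j hij
    fin_cases i <;> fin_cases j <;> simp_all [ha.ne, hb.ne, hc.ne, ha.ne', hb.ne', hc.ne']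
  · intro i j hij
    fin_cases i <;> fin_cases j <;> simp_all [starS4]

lemma subsingleton_or_subsingleton_of_avoids (hG : G.Colorable 2) (hP : Avoids G pathP4)
    (hC : Avoids G cycleC4) {u v : V} (huv : G.Adj u v) :
    (G.neighborSet u).Subsingleton ∨ (G.neighborSet v).Subsingleton := by
  by_contra! h
  obtain ⟨a, hua, hav⟩ := h.1.exists_ne v
  obtain ⟨b, hvb, hbu⟩ := h.2.exists_ne u
  have hub := hG.not_adj_of_adj_of_adj huv hvb
  have hva := hG.not_adj_of_adj_of_adj huv.symm hua
  by_cases hab' : G.Adj a b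
  · refine not_avoids_of_adj_iff ?_ ![u, v, b, a] ?_ ?_ hC
    · simp only [cycleC4]
      decide
    · intro i j hij
      fin_cases i <;> fin_cases j <;> simp_all [huv.ne, hvb.ne, hua.ne, hab'.ne]
    · intro i j hij
      fin_cases i <;> fin_cases j <;> simp_all [cycleC4, hab'.symm]
  · refine not_avoids_of_adj_iff ?_ ![a, u, v, b] ?_ ?_ hP
    · simp only [pathP4]
      decide
    · intro i j hij
      fin_cases i <;> fin_cases j <;> simp_all [huv.ne, hvb.ne, hua.ne]
    · intro i j hij
      fin_cases i <;> fin_cases j <;> simp_all [pathP4, hua.symm, G.adj_comm a v]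

lemma isCherryOrchard_of_avoids (hG : G.Colorable 2) (hP : Avoids G pathP4)
    (hC : Avoids G cycleC4) (hS : Avoids G starS4) : G.IsCherryOrchard where
  eq_or_eq_or_eq _ _ _ _ := eq_or_eq_or_eq_of_avoids_starS4 hG hS
  subsingleton_or_subsingleton _ _ := subsingleton_or_subsingleton_of_avoids hG hP hC

end Avoids

section Counting

open Finset

variable {V : Type*} [Fintype V] {G : SimpleGraph V} [DecidableRel G.Adj]

namespace IsCherryOrchard

lemma degree_le_two (hG : G.IsCherryOrchard) (v : V) : G.degree v ≤ 2 := by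
  by_contra! h
  obtain ⟨a, ha, b, hb, c, hc, hab, hac, hbc⟩ := two_lt_card.1 h
  rw [mem_neighborFinset] at ha hb hc
  rcases hG.eq_or_eq_or_eq ha hb hc with h | h | h <;> contradiction

lemma degree_eq_one_or_degree_eq_one (hG : G.IsCherryOrchard) {u v : V} (huv : G.Adj u v) :
    G.degree u = 1 ∨ G.degree v = 1 := by
  have degree_eq_one {u v : V} (huv : G.Adj u v) (h : (G.neighborSet u).Subsingleton) :
      G.degree u = 1 :=
    card_eq_one.2 ⟨v, ext fun w => by
      simpa [mem_neighborFinset] using ⟨fun hw => h hw huv, fun hw => hw ▸ huv⟩⟩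
  exact (hG.subsingleton_or_subsingleton huv).imp (degree_eq_one huv) (degree_eq_one huv.symm)

/-- Each edge has an endpoint of degree one, so there are at most as many edges as leaves `L`,
while `2 |E| + |L| = ∑ (deg v + [deg v = 1]) ≤ 2 |V|`. -/
lemma three_mul_card_edgeFinset_le (hG : G.IsCherryOrchard) :
    3 * #G.edgeFinset ≤ 2 * Fintype.card V := by
  classical
  set L := univ.filter (G.degree · = 1)
  have hcover : G.edgeFinset ⊆ L.biUnion (G.incidenceFinset ·) := by
    intro e he
    induction e with | _ u v =>
    rw [mem_edgeFinset, mem_edgeSet] at he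
    simp only [mem_biUnion, mem_filter, mem_univ, true_and, mem_incidenceFinset, L]
    rcases hG.degree_eq_one_or_degree_eq_one he with h | h
    · exact ⟨u, h, (G.mk'_mem_incidenceSet_left_iff).2 he⟩
    · exact ⟨v, h, (G.mk'_mem_incidenceSet_right_iff).2 he⟩
  have hedges : #G.edgeFinset ≤ #L :=
    calc #G.edgeFinset ≤ ∑ v ∈ L, #(G.incidenceFinset v) :=
          (card_le_card hcover).trans card_biUnion_le
      _ = #L := by
        rw [card_eq_sum_ones]
        exact sum_congr rfl fun v hv => by
          rw [card_incidenceFinset_eq_degree, (mem_filter.1 hv).2]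
  have hdeg : 2 * #G.edgeFinset + #L ≤ 2 * Fintype.card V := by
    rw [← sum_degrees_eq_twice_card_edges, card_filter, ← sum_add_distrib, mul_comm,
      ← smul_eq_mul, ← card_univ]
    refine sum_le_card_nsmul _ _ _ fun v _ => ?_
    have := hG.degree_le_two v
    split_ifs <;> omega
  omega

end IsCherryOrchard

end Counting

/-- The families counted by `chiCherryOrchard`, on an arbitrary vertex type. -/
structure IsOrchardPartition {ι V : Type*} (C : ι → SimpleGraph V) : Prop where
  existsUnique_adj : ∀ ⦃u v⦄, u ≠ v → ∃! i, (C i).Adj u v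
  colorable : ∀ i, (C i).Colorable 2
  isCherryOrchard : ∀ i, (C i).IsCherryOrchard

lemma isOrchardPartition_iff {n k : ℕ} (P : Fin k → SimpleGraph (Fin n)) :
    (IsBipartitePartition n k P ∧
      ∀ i, Avoids (P i) pathP4 ∧ Avoids (P i) cycleC4 ∧ Avoids (P i) starS4) ↔
    IsOrchardPartition P := by
  have cover : (∀ e ∈ (⊤ : SimpleGraph (Fin n)).edgeSet, ∃! i, e ∈ (P i).edgeSet) ↔
      ∀ ⦃u v⦄, u ≠ v → ∃! i, (P i).Adj u v := by
    simp only [Sym2.forall, mem_edgeSet, top_adj]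
  refine ⟨fun ⟨⟨hcol, hcov⟩, havoid⟩ => ⟨cover.1 hcov, hcol, fun i => ?_⟩,
    fun hP => ⟨⟨hP.colorable, cover.2 hP.existsUnique_adj⟩, fun i => (hP.isCherryOrchard i).avoids⟩⟩
  obtain ⟨hP4, hC4, hS4⟩ := havoid i
  exact isCherryOrchard_of_avoids (hcol i) hP4 hC4 hS4

lemma chiCherryOrchard_eq_sInf (n : ℕ) :
    chiCherryOrchard n = sInf {k | ∃ C : Fin k → SimpleGraph (Fin n), IsOrchardPartition C} := by
  simp only [chiCherryOrchard, isOrchardPartition_iff]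

namespace IsOrchardPartition

variable {ι κ V W : Type*} {C : ι → SimpleGraph V}

lemma comap (hC : IsOrchardPartition C) (f : W ↪ V) :
    IsOrchardPartition fun i => (C i).comap f where
  existsUnique_adj _ _ huv := hC.existsUnique_adj (f.injective.ne huv)
  colorable i := (hC.colorable i).of_hom (Embedding.comap f _).toHom
  isCherryOrchard i := (hC.isCherryOrchard i).comap f

lemma comp_equiv (hC : IsOrchardPartition C) (e : κ ≃ ι) : IsOrchardPartition (C ∘ e) where
  existsUnique_adj _ _ huv := by
    simpa using e.symm.existsUnique_congr_left.1 (hC.existsUnique_adj huv)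
  colorable i := hC.colorable (e i)
  isCherryOrchard i := hC.isCherryOrchard (e i)

lemma exists_fin [Fintype ι] (hC : IsOrchardPartition C) {n k : ℕ} (f : Fin n ↪ V)
    (hk : Fintype.card ι = k) : ∃ C' : Fin k → SimpleGraph (Fin n), IsOrchardPartition C' :=
  ⟨_, (hC.comap f).comp_equiv (Fintype.equivFinOfCardEq hk).symm⟩

open Finset in
lemma three_mul_choose_two_le [Fintype ι] [Fintype V] (hC : IsOrchardPartition C) :
    3 * (Fintype.card V).choose 2 ≤ Fintype.card ι * (2 * Fintype.card V) := by
  classical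
  have hcover : (⊤ : SimpleGraph V).edgeFinset ⊆ univ.biUnion fun i => (C i).edgeFinset := by
    intro e he
    induction e with | _ u v =>
    rw [mem_edgeFinset, mem_edgeSet, top_adj] at he
    obtain ⟨i, hi, -⟩ := hC.existsUnique_adj he
    exact mem_biUnion.2 ⟨i, mem_univ _, mem_edgeFinset.2 hi⟩
  calc 3 * (Fintype.card V).choose 2
      = 3 * #(⊤ : SimpleGraph V).edgeFinset := by rw [card_edgeFinset_top_eq_card_choose_two]
    _ ≤ ∑ i, 3 * #(C i).edgeFinset := by
        rw [← mul_sum]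
        exact Nat.mul_le_mul_left _ ((card_le_card hcover).trans card_biUnion_le)
    _ ≤ ∑ _i : ι, 2 * Fintype.card V :=
        sum_le_sum fun i _ => (hC.isCherryOrchard i).three_mul_card_edgeFinset_le
    _ = Fintype.card ι * (2 * Fintype.card V) := by rw [sum_const, card_univ, smul_eq_mul]

end IsOrchardPartition

section Construction

variable {X Y : Type*} {G : SimpleGraph Y}

def boxProdBotSnd (G : SimpleGraph Y) : (⊥ : SimpleGraph X).boxProd G →g G where
  toFun := Prod.snd
  map_rel' h := by simp_all [boxProd_adj]

lemma IsCherryOrchard.bot_boxProd (hG : G.IsCherryOrchard) :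
    ((⊥ : SimpleGraph X).boxProd G).IsCherryOrchard :=
  hG.of_hom (boxProdBotSnd G) fun v x hx y hy hxy => by
    simp_all [boxProd_adj, boxProdBotSnd, Prod.ext_iff]

lemma Colorable.bot_boxProd {n : ℕ} (hG : G.Colorable n) :
    ((⊥ : SimpleGraph X).boxProd G).Colorable n :=
  hG.of_hom (boxProdBotSnd G)

lemma isCherryOrchard_starGraph (c : ZMod 3) : (starGraph c).IsCherryOrchard where
  eq_or_eq_or_eq v a b d ha hb hd := by
    simp only [starGraph_adj] at ha hb hd
    obtain rfl | hv := eq_or_ne v c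
    · revert v a b d
      decide
    · grind
  subsingleton_or_subsingleton u v huv := by
    simp only [Set.Subsingleton, mem_neighborSet, starGraph_adj] at huv ⊢
    grind

lemma colorable_starGraph (c : X) : (starGraph c).Colorable 2 := by
  classical
  refine (Coloring.mk (fun u => decide (u = c)) ?_).colorable
  rintro u v ⟨huv, rfl | rfl⟩ <;> simp [huv, huv.symm]

variable {A : Type*} [AddCommGroup A]

def cherryShift (a : A) (r : ZMod 3) : A × ZMod 2 :=
  if r = 1 then -(a, 0) else if r = -1 then (a, 1) else 0

/-- The cherries of `crossTemplate c a` are `(c - 1, x - (a, 1)) — (c, x) — (c + 1, x + (a, 0))`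
for `x : A × ZMod 2`; `cherryCentre c a u` is the `x` of the cherry containing `u`. -/
def cherryCentre (c : ZMod 3) (a : A) (u : ZMod 3 × A × ZMod 2) : A × ZMod 2 :=
  u.2 + cherryShift a (u.1 - c)

def crossTemplate (c : ZMod 3) (a : A) : SimpleGraph (ZMod 3 × A × ZMod 2) :=
  ((⊥ : SimpleGraph (A × ZMod 2)).boxProd (starGraph c)).comap fun u => (cherryCentre c a u, u.1)

lemma crossTemplate_adj {c : ZMod 3} {a : A} {u v : ZMod 3 × A × ZMod 2} :
    (crossTemplate c a).Adj u v ↔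
      (starGraph c).Adj u.1 v.1 ∧ cherryCentre c a u = cherryCentre c a v := by
  simp [crossTemplate, boxProd_adj]

lemma injective_cherryCentre_prod_fst (c : ZMod 3) (a : A) :
    Function.Injective fun u : ZMod 3 × A × ZMod 2 => (cherryCentre c a u, u.1) := by
  rintro ⟨p, x⟩ ⟨q, y⟩ h
  obtain ⟨h, rfl⟩ := Prod.mk.inj h
  simpa [cherryCentre] using h

lemma isCherryOrchard_crossTemplate (c : ZMod 3) (a : A) : (crossTemplate c a).IsCherryOrchard :=
  (isCherryOrchard_starGraph c).bot_boxProd.comap ⟨_, injective_cherryCentre_prod_fst c a⟩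

lemma colorable_crossTemplate (c : ZMod 3) (a : A) : (crossTemplate c a).Colorable 2 :=
  (colorable_starGraph c).bot_boxProd.of_hom (Hom.comap _ _)

/-- An edge from part `p` to part `p + 1` with difference `(a, 0)` hangs from a centre in part
`p`, one with difference `(a, 1)` from a centre in part `p + 1`. -/
def crossColour (u v : ZMod 3 × A × ZMod 2) : ZMod 3 × A :=
  (if (v.2 - u.2).2 = 0 then u.1 else v.1, (v.2 - u.2).1)

lemma crossTemplate_adj_iff {c : ZMod 3} {a : A} {u v : ZMod 3 × A × ZMod 2}
    (huv : v.1 = u.1 + 1) : (crossTemplate c a).Adj u v ↔ crossColour u v = (c, a) := by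
  obtain ⟨p, x⟩ := u
  obtain ⟨q, y⟩ := v
  obtain rfl : q = p + 1 := huv
  obtain ⟨r, rfl⟩ : ∃ r, p = c + r := ⟨p - c, by abel⟩
  obtain ⟨⟨b, i⟩, rfl⟩ : ∃ d, y = x + d := ⟨y - x, by abel⟩
  obtain rfl | rfl | rfl : r = 0 ∨ r = 1 ∨ r = -1 := by revert r; decide
  all_goals obtain rfl | rfl : i = 0 ∨ i = 1 := by revert i; decide
  all_goals simp +decide [crossTemplate_adj, cherryCentre, crossColour, cherryShift, add_assoc,
    eq_comm (a := a), add_neg_eq_zero]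

variable {ι : Type*}

/-- `(⊥ : SimpleGraph (ZMod 3)).boxProd G` is three disjoint copies of `G`, one on each part. -/
def tripleFamily (C : ι → SimpleGraph (A × ZMod 2)) :
    ι ⊕ (ZMod 3 × A) → SimpleGraph (ZMod 3 × A × ZMod 2)
  | .inl i => (⊥ : SimpleGraph (ZMod 3)).boxProd (C i)
  | .inr (c, a) => crossTemplate c a

lemma IsOrchardPartition.tripleFamily {C : ι → SimpleGraph (A × ZMod 2)}
    (hC : IsOrchardPartition C) : IsOrchardPartition (tripleFamily C) where
  existsUnique_adj u v huv := by
    by_cases hpart : u.1 = v.1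
    · obtain ⟨i, hi, hunique⟩ := hC.existsUnique_adj fun h => huv (Prod.ext hpart h)
      refine ⟨.inl i, by simp [SimpleGraph.tripleFamily, boxProd_adj, hi, hpart], ?_⟩
      rintro (j | ⟨c, a⟩) hj
      · simp_all [SimpleGraph.tripleFamily, boxProd_adj]
      · simp_all [SimpleGraph.tripleFamily, crossTemplate_adj]
    have oriented {u v : ZMod 3 × A × ZMod 2} (h : v.1 = u.1 + 1) :
        ∃! t, (SimpleGraph.tripleFamily C t).Adj u v := by
      refine ⟨.inr (crossColour u v), (crossTemplate_adj_iff h).2 rfl, ?_⟩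
      rintro (j | ⟨c, a⟩) hj
      · simp_all [SimpleGraph.tripleFamily, boxProd_adj]
      · rw [SimpleGraph.tripleFamily, crossTemplate_adj_iff h] at hj
        rw [hj]
    have zmod_three : ∀ p q : ZMod 3, p ≠ q → q = p + 1 ∨ p = q + 1 := by decide
    rcases zmod_three _ _ hpart with h | h
    · exact oriented h
    · simpa only [adj_comm] using oriented h
  colorable
    | .inl i => (hC.colorable i).bot_boxProd
    | .inr (c, a) => colorable_crossTemplate c a
  isCherryOrchard
    | .inl i => (hC.isCherryOrchard i).bot_boxProd
    | .inr (c, a) => isCherryOrchard_crossTemplate c a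

lemma exists_isOrchardPartition_of_le_six_mul {n h k : ℕ} [NeZero h] (hn : n ≤ 6 * h)
    (hC : ∃ C : Fin k → SimpleGraph (Fin (2 * h)), IsOrchardPartition C) :
    ∃ C : Fin (k + 3 * h) → SimpleGraph (Fin n), IsOrchardPartition C := by
  obtain ⟨C, hC⟩ := hC
  let e : ZMod h × ZMod 2 ≃ Fin (2 * h) := Fintype.equivFinOfCardEq (by simp [mul_comm])
  obtain ⟨f⟩ : Nonempty (Fin n ↪ ZMod 3 × ZMod h × ZMod 2) :=
    Function.Embedding.nonempty_of_card_le (by simp; omega)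
  exact (hC.comap e.toEmbedding).tripleFamily.exists_fin f (by simp)

lemma isOrchardPartition_top {n : ℕ} (hn : n ≤ 2) :
    IsOrchardPartition fun _ : Fin 1 => (⊤ : SimpleGraph (Fin n)) where
  existsUnique_adj u v huv := ⟨0, huv, fun _ _ => Subsingleton.elim _ _⟩
  colorable _ := (colorable_of_fintype _).mono (by simpa using hn)
  isCherryOrchard _ :=
    { eq_or_eq_or_eq v a b c ha hb hc := by
        simp only [top_adj, ne_eq, Fin.ext_iff] at *
        omega
      subsingleton_or_subsingleton u v _ := .inl fun x hx y hy => by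
        simp only [mem_neighborSet, top_adj, ne_eq, Fin.ext_iff] at *
        omega }

end Construction

end SimpleGraph

lemma Real.log_le_log_sub_one_div_nine {x y : ℝ} (hx : 0 < x) (hxy : 9 * x ≤ 8 * y) :
    Real.log x ≤ Real.log y - 1 / 9 := by
  have hy : 0 < y := by linarith
  have hratio : x / y ≤ 8 / 9 := by
    rw [div_le_iff₀ hy]
    linarith
  have := Real.log_le_sub_one_of_pos (div_pos hx hy)
  rw [Real.log_div hx.ne' hy.ne'] at this
  linarith

/-- The recursion `χ(n) ≤ χ(2h) + 3h` with `h = ⌈n/6⌉` adds at most `15/4` to `χ(n) - 3n/4`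
while `log n` grows by at least `1/9`. -/
theorem exists_isOrchardPartition_card_le (n : ℕ) :
    ∃ k : ℕ, (k : ℝ) ≤ 3 / 4 * n + 36 * Real.log n + 1 ∧
      ∃ C : Fin k → SimpleGraph (Fin n), IsOrchardPartition C := by
  induction n using Nat.strong_induction_on with | _ n ih =>
  by_cases hn : n ≤ 2
  · refine ⟨1, ?_, _, isOrchardPartition_top hn⟩
    have := Real.log_natCast_nonneg n
    have : (0 : ℝ) ≤ n := n.cast_nonneg
    push_cast
    linarith
  set h := (n + 5) / 6
  have : NeZero h := ⟨by omega⟩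
  obtain ⟨k, hk, hC⟩ := ih (2 * h) (by omega)
  refine ⟨k + 3 * h, ?_, exists_isOrchardPartition_of_le_six_mul (by omega) hC⟩
  have h6 : (6 * h : ℝ) ≤ n + 5 := by exact_mod_cast (by omega : 6 * h ≤ n + 5)
  have hlog := Real.log_le_log_sub_one_div_nine (x := (2 * h : ℕ)) (y := n)
    (by norm_cast; omega) (by norm_cast; omega)
  push_cast at hk hlog ⊢
  linarith

lemma chiCherryOrchard_le (n : ℕ) :
    (chiCherryOrchard n : ℝ) ≤ 3 / 4 * n + 36 * Real.log n + 1 := by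
  obtain ⟨k, hk, hC⟩ := exists_isOrchardPartition_card_le n
  rw [chiCherryOrchard_eq_sInf]
  exact (Nat.cast_le.2 (Nat.sInf_le hC)).trans hk

lemma le_chiCherryOrchard (n : ℕ) : 3 / 4 * (n : ℝ) - 3 / 4 ≤ chiCherryOrchard n := by
  obtain ⟨k, -, hk⟩ := exists_isOrchardPartition_card_le n
  obtain ⟨C, hC⟩ : ∃ C : Fin (chiCherryOrchard n) → SimpleGraph (Fin n), IsOrchardPartition C := by
    rw [chiCherryOrchard_eq_sInf]
    exact Nat.sInf_mem (s := {k | ∃ C : Fin k → SimpleGraph (Fin n), IsOrchardPartition C}) ⟨k, hk⟩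
  have hcount : (3 * n.choose 2 : ℝ) ≤ chiCherryOrchard n * (2 * n) := by
    exact_mod_cast (by simpa using hC.three_mul_choose_two_le)
  rw [Nat.cast_choose_two] at hcount
  have hchi : (0 : ℝ) ≤ chiCherryOrchard n := Nat.cast_nonneg _
  rcases Nat.eq_zero_or_pos n with rfl | hn
  · norm_num
    linarith
  have hn : (0 : ℝ) < n := by exact_mod_cast hn
  nlinarith

open Asymptotics Filter in
/-- `χ'_{P₄,C₄,S₄}(n) = (3/4)n + o(n)`. -/
theorem chiCherryOrchard_asymp :
    (fun n : ℕ => (chiCherryOrchard n : ℝ) - 3 / 4 * (n : ℝ)) =o[atTop]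
      (fun n : ℕ => (n : ℝ)) := by
  have hlog : (fun n : ℕ => 36 * Real.log n + 1) =o[atTop] (fun n : ℕ => (n : ℝ)) :=
    ((Real.isLittleO_log_id_atTop.comp_tendsto tendsto_natCast_atTop_atTop).const_mul_left 36).add
      (isLittleO_const_left.2 (.inr (tendsto_norm_atTop_atTop.comp tendsto_natCast_atTop_atTop)))
  refine IsBigO.trans_isLittleO (isBigO_of_le _ fun n => ?_) hlog
  have hlower := le_chiCherryOrchard n
  have hupper := chiCherryOrchard_le n
  have hlog_nonneg := Real.log_natCast_nonneg n
  rw [Real.norm_eq_abs, Real.norm_eq_abs, abs_le]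
  constructor <;> linarith [le_abs_self (36 * Real.log n + 1)]
end
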